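/- arXiv:1407.0465 — 6 statements merged into one kernel-verified Lean document; each statement's English description precedes it below -/
import Mathlib

section
/- Suppose α and β are real numbers with α < β, there exists x̄ ∈ ℝⁿ with α < h(x̄) < β, and in addition either A is positive semidefinite or B ≠ 0. Then (S₁) holds if and only if (S₂) holds. -/
/-!
S-lemma: if `g(z) < 0` somewhere and `f ≥ 0` wherever `g < 0`, then `f + λ g ≥ 0` for some
`λ ≥ 0`. For quadratic forms, the two zeros of `g` on the line through `x` in direction `y` give
`f(x) (-g(y)) + f(y) g(x) ≥ 0` whenever `g(x) > 0 > g(y)`, so `λ = inf {f(y) / (-g(y)) | g(y) < 0}`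
works; inhomogeneous quadratics are homogenized on `ℝⁿ × ℝ`.

If `{f < 0, h < β}` is empty, the S-lemma for `h - β` gives `μ ≤ 0`; if `{f < 0, h > α}` is empty,
the S-lemma for `α - h` gives `μ ≥ 0`. Otherwise, since the interval system is infeasible, `f < 0`
at some `x₁` with `h(x₁) < α` and at some `x₂` with `h(x₂) > β`. If `A ⪰ 0`, `f` is convex and `h`
crosses `α` on `[x₁, x₂]`. Otherwise some `u` has `uᵀAu < 0` and `uᵀBu ≠ 0`; on the line through
`x₁` (or `x₂`) in direction `u`, the concave `f` stays negative on a half-line along which `h` tends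
to `+∞` (or `-∞`), so `h` crosses `α` (or `β`) there.
-/

open Matrix

/-- The quadratic function `x ↦ xᵀ M x + 2 mᵀ x + r`. -/
noncomputable def qfun {n : ℕ} (M : Matrix (Fin n) (Fin n) ℝ) (m : Fin n → ℝ) (r : ℝ)
    (x : Fin n → ℝ) : ℝ :=
  x ⬝ᵥ M *ᵥ x + 2 * (m ⬝ᵥ x) + r

open Filter Topology Set

theorem exists_quadratic_roots_of_neg_of_pos {a b c : ℝ} (ha : a < 0) (hc : 0 < c) :
    ∃ t₀ t₁ : ℝ, t₁ < 0 ∧ 0 < t₀ ∧ a * t₀ ^ 2 + b * t₀ + c = 0 ∧ a * t₁ ^ 2 + b * t₁ + c = 0 ∧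
      a * (t₀ * t₁) = c := by
  have hdisc : 0 ≤ b ^ 2 - 4 * a * c := by nlinarith [sq_nonneg b]
  set s := √(b ^ 2 - 4 * a * c)
  have hs : s ^ 2 = b ^ 2 - 4 * a * c := Real.sq_sqrt hdisc
  obtain ⟨hb₁, hb₂⟩ := abs_lt.mp (abs_lt_of_sq_lt_sq (by nlinarith) (Real.sqrt_nonneg _) : |b| < s)
  have ha' : a ≠ 0 := ha.ne
  refine ⟨(-b - s) / (2 * a), (-b + s) / (2 * a), div_neg_of_pos_of_neg (by linarith) (by linarith),
    div_pos_of_neg_of_neg (by linarith) (by linarith), ?_, ?_, ?_⟩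
  · field_simp
    linear_combination hs
  · field_simp
    linear_combination hs
  · field_simp
    linear_combination -hs

theorem tendsto_quadratic_atTop {a : ℝ} (ha : 0 < a) (b c : ℝ) :
    Tendsto (fun t : ℝ => a * t ^ 2 + b * t + c) atTop atTop := by
  have : Tendsto (fun t : ℝ => t * (a * t + b)) atTop atTop :=
    tendsto_id.atTop_mul_atTop₀ (tendsto_atTop_add_const_right _ b (tendsto_id.const_mul_atTop ha))
  exact tendsto_atTop_add_const_right _ c (this.congr fun t => by ring)

theorem tendsto_quadratic_atBot {a : ℝ} (ha : 0 < a) (b c : ℝ) :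
    Tendsto (fun t : ℝ => a * t ^ 2 + b * t + c) atBot atTop :=
  ((tendsto_quadratic_atTop ha (-b) c).comp tendsto_neg_atBot_atTop).congr fun t => by
    simp only [Function.comp_apply]
    ring

theorem quadratic_neg_on_Ici_or_Iic {p q r : ℝ} (hp : p < 0) (hr : r < 0) :
    (∀ t ≥ 0, p * t ^ 2 + q * t + r < 0) ∨ (∀ t ≤ 0, p * t ^ 2 + q * t + r < 0) := by
  by_contra! h
  obtain ⟨⟨T, hT, hψT⟩, ⟨S, hS, hψS⟩⟩ := h
  have hT₀ : 0 < T := hT.lt_of_ne (by rintro rfl; simp at hψT; linarith)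
  have hpST : 0 ≤ p * S * T := mul_nonneg (mul_nonneg_of_nonpos_of_nonpos hp.le hS) hT
  have hneg : (T - S) * (r - p * S * T) < 0 := mul_neg_of_pos_of_neg (by linarith) (by linarith)
  have hcomb : -S * (p * T ^ 2 + q * T + r) + T * (p * S ^ 2 + q * S + r)
      = (T - S) * (r - p * S * T) := by ring
  have := add_nonneg (mul_nonneg (neg_nonneg.mpr hS) hψT) (mul_nonneg hT hψS)
  linarith

theorem quadratic_neg_of_mem_Icc {p q r t : ℝ} (hp : 0 ≤ p) (h₀ : r < 0) (h₁ : p + q + r < 0)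
    (ht : t ∈ Icc 0 1) : p * t ^ 2 + q * t + r < 0 := by
  obtain ⟨ht₀, ht₁⟩ := ht
  have hconv : p * t ^ 2 + q * t + r = (1 - t) * r + t * (p + q + r) - t * (1 - t) * p := by ring
  have hcurv : 0 ≤ t * (1 - t) * p := mul_nonneg (mul_nonneg ht₀ (sub_nonneg.2 ht₁)) hp
  have hr : (1 - t) * r ≤ 0 := mul_nonpos_of_nonneg_of_nonpos (sub_nonneg.2 ht₁) h₀.le
  rcases ht₀.eq_or_lt with rfl | htpos
  · simpa using h₀
  · linarith [mul_neg_of_pos_of_neg htpos h₁]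

theorem exists_quadratic_neg_and_eq {p q r u v w e : ℝ} (hp : p < 0) (hr : r < 0) (hu : 0 < u)
    (hw : w < e) : ∃ t, p * t ^ 2 + q * t + r < 0 ∧ u * t ^ 2 + v * t + w = e := by
  have hcont : Continuous fun t : ℝ => u * t ^ 2 + v * t + w := by fun_prop
  have he : e ∈ Ici ((fun t : ℝ => u * t ^ 2 + v * t + w) 0) := by simpa using hw.le
  rcases quadratic_neg_on_Ici_or_Iic (q := q) hp hr with hψ | hψ
  · obtain ⟨t, ht, hte⟩ :=
      intermediate_value_Ici hcont.continuousOn (tendsto_quadratic_atTop hu v w) he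
    exact ⟨t, hψ t ht, hte⟩
  · obtain ⟨t, ht, hte⟩ :=
      intermediate_value_Iic' hcont.continuousOn (tendsto_quadratic_atBot hu v w) he
    exact ⟨t, hψ t ht, hte⟩

namespace QuadraticMap

variable {V : Type*} [AddCommGroup V] [Module ℝ V]

theorem map_add_smul_eq (Q : QuadraticMap ℝ V ℝ) (x y : V) (t : ℝ) :
    Q (x + t • y) = Q y * t ^ 2 + polar Q x y * t + Q x := by
  rw [QuadraticMap.map_add Q, Q.map_smul, polar_smul_right, smul_eq_mul, smul_eq_mul]
  ring

theorem continuous_map_add_smul (Q : QuadraticMap ℝ V ℝ) (x y : V) :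
    Continuous fun t : ℝ => Q (x + t • y) := by
  simp only [map_add_smul_eq]
  fun_prop

theorem nonneg_of_eventually_nonneg_add_smul (Q : QuadraticMap ℝ V ℝ) {x y : V}
    (h : ∀ᶠ t in 𝓝[>] (0 : ℝ), 0 ≤ Q (x + t • y)) : 0 ≤ Q x := by
  have hlim : Tendsto (fun t : ℝ => Q (x + t • y)) (𝓝[>] 0) (𝓝 (Q x)) := by
    simpa using ((continuous_map_add_smul Q x y).tendsto 0).mono_left nhdsWithin_le_nhds
  exact ge_of_tendsto hlim h

theorem exists_neg_and_ne_zero {F G : QuadraticMap ℝ V ℝ} (hF : ∃ v, F v < 0) (hG : G ≠ 0) :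
    ∃ u, F u < 0 ∧ G u ≠ 0 := by
  by_contra! hFG
  obtain ⟨v, hv⟩ := hF
  refine hG (QuadraticMap.ext fun w => ?_)
  obtain ⟨ε, hε, hball⟩ := Metric.eventually_nhds_iff.mp <|
    ((continuous_map_add_smul F v w).tendsto' 0 (F v) (by simp)).eventually_lt_const hv
  -- `G` vanishes at `v` and `v ± (ε/2) w`, so the second difference `2 (ε/2)² G w` vanishes.
  have hG_near : ∀ t : ℝ, |t| < ε → G (v + t • w) = 0 := fun t ht =>
    hFG _ (hball (by simpa using ht))
  have h₀ := hG_near 0 (by simpa using hε)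
  have hpos := hG_near (ε / 2) (by rw [abs_of_pos (by positivity)]; linarith)
  have hneg := hG_near (-(ε / 2)) (by rw [abs_neg, abs_of_pos (by positivity)]; linarith)
  rw [map_add_smul_eq] at h₀ hpos hneg
  have : G w * (ε / 2) ^ 2 = 0 := by linarith
  simpa [hε.ne'] using this

variable {F G : QuadraticMap ℝ V ℝ}

theorem nonneg_of_nonpos {z x : V} (hz : G z < 0) (h : ∀ y, G y < 0 → 0 ≤ F y)
    (hx : G x ≤ 0) : 0 ≤ F x := by
  obtain ⟨y, hGy, hpolar⟩ : ∃ y, G y < 0 ∧ polar G x y ≤ 0 := by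
    rcases le_total (polar G x z) 0 with hxz | hxz
    · exact ⟨z, hz, hxz⟩
    · exact ⟨-z, by rwa [QuadraticMap.map_neg], by rw [polar_neg_right]; linarith⟩
  refine F.nonneg_of_eventually_nonneg_add_smul (y := y) ?_
  filter_upwards [self_mem_nhdsWithin] with t (ht : 0 < t)
  apply h
  rw [map_add_smul_eq]
  linarith [mul_neg_of_neg_of_pos hGy (pow_pos ht 2), mul_nonpos_of_nonpos_of_nonneg hpolar ht.le]

theorem nonneg_mul_add_mul_of_pos_of_neg (h : ∀ z, G z ≤ 0 → 0 ≤ F z) {x y : V}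
    (hx : 0 < G x) (hy : G y < 0) : 0 ≤ F x * -G y + F y * G x := by
  obtain ⟨t₀, t₁, ht₁, ht₀, hroot₀, hroot₁, hprod⟩ :=
    exists_quadratic_roots_of_neg_of_pos (b := polar G x y) hy hx
  have hF₀ := h (x + t₀ • y) (by rw [map_add_smul_eq, hroot₀])
  have hF₁ := h (x + t₁ • y) (by rw [map_add_smul_eq, hroot₁])
  rw [map_add_smul_eq] at hF₀ hF₁
  have hcomb : -t₁ * (F y * t₀ ^ 2 + polar F x y * t₀ + F x)
      + t₀ * (F y * t₁ ^ 2 + polar F x y * t₁ + F x) = (t₀ - t₁) * (F x - t₀ * t₁ * F y) := by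
    ring
  have hprod_nonneg : 0 ≤ (t₀ - t₁) * (F x - t₀ * t₁ * F y) := by
    rw [← hcomb]
    exact add_nonneg (mul_nonneg (neg_nonneg.mpr ht₁.le) hF₀) (mul_nonneg ht₀.le hF₁)
  have hdiff : 0 ≤ F x - t₀ * t₁ * F y := nonneg_of_mul_nonneg_right hprod_nonneg (by linarith)
  have := mul_nonneg (neg_nonneg.mpr hy.le) hdiff
  rw [← hprod]
  linarith

theorem s_lemma {z : V} (hz : G z < 0) (h : ∀ x, G x < 0 → 0 ≤ F x) :
    ∃ l : ℝ, 0 ≤ l ∧ ∀ x, 0 ≤ F x + l * G x := by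
  have h' : ∀ x, G x ≤ 0 → 0 ≤ F x := fun x => nonneg_of_nonpos hz h
  set T : Set ℝ := (fun y => F y / -G y) '' {y | G y < 0}
  have hT : ∀ c ∈ T, 0 ≤ c := by
    rintro _ ⟨y, hy, rfl⟩
    exact div_nonneg (h y hy) (neg_nonneg.mpr (le_of_lt hy))
  have hTne : T.Nonempty := ⟨_, z, hz, rfl⟩
  refine ⟨sInf T, le_csInf hTne hT, fun x => ?_⟩
  rcases lt_trichotomy (G x) 0 with hx | hx | hx
  · have := csInf_le ⟨0, hT⟩ (⟨x, hx, rfl⟩ : F x / -G x ∈ T)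
    rw [le_div_iff₀ (neg_pos.mpr hx)] at this
    linarith
  · simpa [hx] using h' x hx.le
  · have : -F x / G x ≤ sInf T := by
      refine le_csInf hTne ?_
      rintro _ ⟨y, hy, rfl⟩
      rw [div_le_div_iff₀ hx (neg_pos.mpr hy)]
      linarith [nonneg_mul_add_mul_of_pos_of_neg h' hx hy]
    rw [div_le_iff₀ hx] at this
    linarith

end QuadraticMap

section MatrixForms

variable {ι : Type*} [Fintype ι]

theorem Matrix.toQuadraticForm'_apply [DecidableEq ι] (M : Matrix ι ι ℝ) (x : ι → ℝ) :
    M.toQuadraticForm' x = x ⬝ᵥ M *ᵥ x := by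
  simp [Matrix.toQuadraticForm', toLinearMap₂'_apply']

theorem Matrix.IsSymm.toQuadraticForm'_ne_zero [DecidableEq ι] {M : Matrix ι ι ℝ}
    (hM : M.IsSymm) (hM₀ : M ≠ 0) : M.toQuadraticForm' ≠ 0 := by
  intro h
  have hsymm : ∀ x y, toLinearMap₂' ℝ M x y = toLinearMap₂' ℝ M y x := fun x y => by
    rw [toLinearMap₂'_apply', toLinearMap₂'_apply', dotProduct_mulVec, ← mulVec_transpose, hM.eq,
      dotProduct_comm]
  have := QuadraticMap.associated_left_inverse (S := ℝ) hsymm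
  rw [← Matrix.toQuadraticForm', h, map_zero] at this
  exact hM₀ ((toLinearMap₂' ℝ).injective (by rw [← this, map_zero]))

theorem Matrix.exists_dotProduct_mulVec_neg_of_not_posSemidef {M : Matrix ι ι ℝ} (hM : M.IsSymm)
    (hM' : ¬ M.PosSemidef) : ∃ v, v ⬝ᵥ M *ᵥ v < 0 := by
  simpa [posSemidef_iff_dotProduct_mulVec, hM] using hM'

end MatrixForms

section Quadratic

variable {n : ℕ} (M : Matrix (Fin n) (Fin n) ℝ) (m : Fin n → ℝ) (r : ℝ)

theorem qfun_add_smul (x v : Fin n → ℝ) (t : ℝ) : qfun M m r (x + t • v) =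
      (v ⬝ᵥ M *ᵥ v) * t ^ 2 + (x ⬝ᵥ M *ᵥ v + v ⬝ᵥ M *ᵥ x + 2 * (m ⬝ᵥ v)) * t + qfun M m r x := by
  simp only [qfun, mulVec_add, mulVec_smul, dotProduct_add, add_dotProduct, dotProduct_smul,
    smul_dotProduct, smul_eq_mul]
  ring

theorem qfun_neg (x : Fin n → ℝ) :
    qfun (-M) (-m) (-r) x = -qfun M m r x := by
  simp only [qfun, neg_mulVec, dotProduct_neg, neg_dotProduct]
  ring

theorem qfun_sub_const (s : ℝ) (x : Fin n → ℝ) :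
    qfun M m (r - s) x = qfun M m r x - s := by
  simp only [qfun]
  ring

noncomputable def homogenize : QuadraticForm ℝ ((Fin n → ℝ) × ℝ) :=
  M.toQuadraticForm'.comp (LinearMap.fst ℝ _ ℝ)
    + 2 • QuadraticMap.linMulLin (dotProductBilin ℝ ℝ m ∘ₗ LinearMap.fst ℝ _ ℝ)
      (LinearMap.snd ℝ _ ℝ)
    + r • QuadraticMap.sq.comp (LinearMap.snd ℝ _ ℝ)

theorem homogenize_apply (x : Fin n → ℝ) (s : ℝ) :
    homogenize M m r (x, s) = x ⬝ᵥ M *ᵥ x + 2 * (m ⬝ᵥ x) * s + r * s ^ 2 := by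
  simp [homogenize, Matrix.toQuadraticForm'_apply, dotProductBilin]
  ring

theorem homogenize_apply_one (x : Fin n → ℝ) : homogenize M m r (x, 1) = qfun M m r x := by
  simp [homogenize_apply, qfun]

theorem homogenize_apply_of_ne_zero (x : Fin n → ℝ) {s : ℝ} (hs : s ≠ 0) :
    homogenize M m r (x, s) = s ^ 2 * qfun M m r (s⁻¹ • x) := by
  have : ((x, s) : (Fin n → ℝ) × ℝ) = s • (s⁻¹ • x, 1) := by simp [smul_smul, hs]
  rw [this, QuadraticMap.map_smul, homogenize_apply_one, smul_eq_mul, sq]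

end Quadratic

section Inhomogeneous

variable {n : ℕ} {A B : Matrix (Fin n) (Fin n) ℝ} {a b : Fin n → ℝ} {c d : ℝ}

theorem s_lemma_qfun {z : Fin n → ℝ} (hz : qfun B b d z < 0)
    (h : ∀ x, qfun B b d x < 0 → 0 ≤ qfun A a c x) :
    ∃ l : ℝ, 0 ≤ l ∧ ∀ x, 0 ≤ qfun A a c x + l * qfun B b d x := by
  have hscaled : ∀ x s, s ≠ 0 → homogenize B b d (x, s) < 0 → 0 ≤ homogenize A a c (x, s) := by
    intro x s hs hneg
    rw [homogenize_apply_of_ne_zero _ _ _ _ hs] at hneg ⊢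
    exact mul_nonneg (sq_nonneg s) (h _ (neg_of_mul_neg_right hneg (sq_nonneg s)))
  have hhom : ∀ p, homogenize B b d p < 0 → 0 ≤ homogenize A a c p := by
    rintro ⟨x, s⟩ hneg
    rcases ne_or_eq s 0 with hs | rfl
    · exact hscaled x s hs hneg
    refine (homogenize A a c).nonneg_of_eventually_nonneg_add_smul (y := (0, 1)) ?_
    have hnear : ∀ᶠ t in 𝓝[>] (0 : ℝ), homogenize B b d ((x, 0) + t • (0, 1)) < 0 :=
      (((homogenize B b d).continuous_map_add_smul _ _).tendsto' 0 _ (by simp)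
        |>.eventually_lt_const hneg).filter_mono nhdsWithin_le_nhds
    filter_upwards [hnear, self_mem_nhdsWithin] with t hGt (ht : 0 < t)
    simpa using hscaled x t ht.ne' (by simpa using hGt)
  obtain ⟨l, hl, hFG⟩ := QuadraticMap.s_lemma (z := (z, 1)) (by rwa [homogenize_apply_one]) hhom
  exact ⟨l, hl, fun x => by simpa only [homogenize_apply_one] using hFG (x, 1)⟩

theorem exists_qfun_neg_and_eq_of_neg_of_pos {x u : Fin n → ℝ} {γ : ℝ} (huA : u ⬝ᵥ A *ᵥ u < 0)
    (huB : 0 < u ⬝ᵥ B *ᵥ u) (hx : qfun A a c x < 0) (hxγ : qfun B b d x < γ) :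
    ∃ y, qfun A a c y < 0 ∧ qfun B b d y = γ := by
  obtain ⟨t, hfA, hfB⟩ := exists_quadratic_neg_and_eq huA hx huB hxγ
  exact ⟨x + t • u, by rwa [qfun_add_smul], by rwa [qfun_add_smul]⟩

theorem exists_qfun_neg_and_eq_of_posSemidef (hA : A.PosSemidef) {x₁ x₂ : Fin n → ℝ} {γ : ℝ}
    (hx₁ : qfun A a c x₁ < 0) (hx₂ : qfun A a c x₂ < 0) (h₁ : qfun B b d x₁ ≤ γ)
    (h₂ : γ ≤ qfun B b d x₂) : ∃ y, qfun A a c y < 0 ∧ qfun B b d y = γ := by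
  set v := x₂ - x₁
  have hx₁v : x₁ + v = x₂ := add_sub_cancel x₁ x₂
  have hcont : ContinuousOn (fun t : ℝ => qfun B b d (x₁ + t • v)) (Icc 0 1) := by
    simp only [qfun_add_smul]
    fun_prop
  obtain ⟨t, ht, hγ⟩ := intermediate_value_Icc zero_le_one hcont
    (by simp only [zero_smul, add_zero, one_smul, hx₁v]; exact ⟨h₁, h₂⟩)
  have hf₁ := qfun_add_smul A a c x₁ v 1
  rw [one_smul, hx₁v, one_pow, mul_one, mul_one] at hf₁
  refine ⟨x₁ + t • v, ?_, hγ⟩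
  rw [qfun_add_smul]
  exact quadratic_neg_of_mem_Icc (by simpa using hA.dotProduct_mulVec_nonneg v) hx₁
    (hf₁ ▸ hx₂) ht

theorem exists_qfun_neg_and_mem_Icc (hA : A.IsSymm) (hB : B.IsSymm) {α β : ℝ} (hαβ : α ≤ β)
    (hAB : A.PosSemidef ∨ B ≠ 0) {x₁ x₂ : Fin n → ℝ}
    (hx₁ : qfun A a c x₁ < 0) (hx₁β : qfun B b d x₁ < β)
    (hx₂ : qfun A a c x₂ < 0) (hx₂α : α < qfun B b d x₂) :
    ∃ x, qfun A a c x < 0 ∧ α ≤ qfun B b d x ∧ qfun B b d x ≤ β := by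
  rcases le_or_gt α (qfun B b d x₁) with h₁ | h₁
  · exact ⟨x₁, hx₁, h₁, hx₁β.le⟩
  rcases le_or_gt (qfun B b d x₂) β with h₂ | h₂
  · exact ⟨x₂, hx₂, hx₂α.le, h₂⟩
  suffices ∃ x, qfun A a c x < 0 ∧ (qfun B b d x = α ∨ qfun B b d x = β) by
    obtain ⟨x, hx, hxα | hxβ⟩ := this
    · exact ⟨x, hx, hxα.ge, hxα ▸ hαβ⟩
    · exact ⟨x, hx, hxβ ▸ hαβ, hxβ.le⟩
  by_cases hpsd : A.PosSemidef
  · obtain ⟨x, hx, hxα⟩ := exists_qfun_neg_and_eq_of_posSemidef hpsd hx₁ hx₂ h₁.le (by linarith)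
    exact ⟨x, hx, .inl hxα⟩
  obtain ⟨u, huA, huB⟩ := QuadraticMap.exists_neg_and_ne_zero (F := A.toQuadraticForm')
    (G := B.toQuadraticForm')
    (by simpa [toQuadraticForm'_apply] using
      exists_dotProduct_mulVec_neg_of_not_posSemidef hA hpsd)
    (hB.toQuadraticForm'_ne_zero (hAB.resolve_left hpsd))
  rw [toQuadraticForm'_apply] at huA huB
  rcases huB.lt_or_gt with huB | huB
  · obtain ⟨x, hx, hxβ⟩ :=
      exists_qfun_neg_and_eq_of_neg_of_pos (B := -B) (b := -b) (d := -d) (γ := -β) huA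
        (by rw [neg_mulVec, dotProduct_neg]; linarith) hx₂ (by rw [qfun_neg]; linarith)
    exact ⟨x, hx, .inr (by rw [qfun_neg] at hxβ; linarith)⟩
  · obtain ⟨x, hx, hxα⟩ := exists_qfun_neg_and_eq_of_neg_of_pos huA huB hx₁ h₁
    exact ⟨x, hx, .inl hxα⟩

end Inhomogeneous

theorem s_lemma_interval_bounds_general (n : ℕ)
    (A B : Matrix (Fin n) (Fin n) ℝ) (hA : A.IsSymm) (hB : B.IsSymm)
    (a b : Fin n → ℝ) (c d : ℝ) (α β : ℝ) (hαβ : α < β)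
    (hSlater : ∃ xbar : Fin n → ℝ, α < qfun B b d xbar ∧ qfun B b d xbar < β)
    (hmain : A.PosSemidef ∨ B ≠ 0) :
    (¬ ∃ x : Fin n → ℝ, qfun A a c x < 0 ∧ α ≤ qfun B b d x ∧ qfun B b d x ≤ β) ↔
      (∃ μ : ℝ, ∀ x : Fin n → ℝ,
        qfun A a c x + (-(min μ 0)) * (qfun B b d x - β)
          + (max μ 0) * (α - qfun B b d x) ≥ 0) := by
  obtain ⟨xbar, hαx, hxβ⟩ := hSlater
  refine ⟨fun hS₁ => ?_, ?_⟩
  · by_cases hbelow : ∀ x, qfun B b (d - β) x < 0 → 0 ≤ qfun A a c x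
    · obtain ⟨l, hl, hfl⟩ := s_lemma_qfun (z := xbar) (by rw [qfun_sub_const]; linarith) hbelow
      refine ⟨-l, fun x => ?_⟩
      rw [min_eq_left (neg_nonpos.2 hl), max_eq_right (neg_nonpos.2 hl)]
      linarith [qfun_sub_const B b d β x ▸ hfl x]
    by_cases habove : ∀ x, qfun (-B) (-b) (-(d - α)) x < 0 → 0 ≤ qfun A a c x
    · obtain ⟨l, hl, hfl⟩ := s_lemma_qfun (z := xbar)
        (by rw [qfun_neg, qfun_sub_const]; linarith) habove
      refine ⟨l, fun x => ?_⟩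
      rw [min_eq_right hl, max_eq_left hl]
      linarith [qfun_sub_const B b d α x ▸ qfun_neg B b (d - α) x ▸ hfl x]
    push Not at hbelow habove
    obtain ⟨x₁, hx₁β, hx₁⟩ := hbelow
    obtain ⟨x₂, hx₂α, hx₂⟩ := habove
    rw [qfun_sub_const] at hx₁β
    rw [qfun_neg, qfun_sub_const] at hx₂α
    exact (hS₁ <| exists_qfun_neg_and_mem_Icc hA hB hαβ.le hmain hx₁ (by linarith) hx₂
      (by linarith)).elim
  · rintro ⟨μ, hμ⟩ ⟨x, hfx, hαx, hxβ⟩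
    have hlow : -min μ 0 * (qfun B b d x - β) ≤ 0 :=
      mul_nonpos_of_nonneg_of_nonpos (by simp) (by linarith)
    have hup : max μ 0 * (α - qfun B b d x) ≤ 0 :=
      mul_nonpos_of_nonneg_of_nonpos (le_max_right μ 0) (by linarith)
    linarith [hμ x]

/-- S-lemma with interval bounds, under the assumption that `A ⪰ 0` or `B ≠ 0`. -/
theorem s_lemma_interval_bounds (n : ℕ) (hn : 0 < n)
    (A B : Matrix (Fin n) (Fin n) ℝ) (hA : A.IsSymm) (hB : B.IsSymm)
    (a b : Fin n → ℝ) (c d : ℝ) (α β : ℝ) (hαβ : α < β)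
    (hSlater : ∃ xbar : Fin n → ℝ, α < qfun B b d xbar ∧ qfun B b d xbar < β)
    (hmain : A.PosSemidef ∨ B ≠ 0) :
    (¬ ∃ x : Fin n → ℝ, qfun A a c x < 0 ∧ α ≤ qfun B b d x ∧ qfun B b d x ≤ β) ↔
      (∃ μ : ℝ, ∀ x : Fin n → ℝ,
        qfun A a c x + (-(min μ 0)) * (qfun B b d x - β)
          + (max μ 0) * (α - qfun B b d x) ≥ 0) :=
  s_lemma_interval_bounds_general n A B hA hB a b c d α β hαβ hSlater hmain
end

section
/- (S-lemma of Yakubovich) Suppose there exists x̄ ∈ ℝⁿ with h(x̄) < 0. Then the system f(x) < 0, h(x) ≤ 0 has no solution x ∈ ℝⁿ if and only if there exists a real number μ ≥ 0 such that f(x) + μ·h(x) ≥ 0 for all x ∈ ℝⁿ. -/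
/-!
Homogenize: `f` and `h` become quadratic forms `F`, `H` on `ℝⁿ × ℝ` with `F (x, 1) = f x`.
If `f < 0, h ≤ 0` is infeasible, so is `F < 0, H < 0`: a solution with `t ≠ 0` rescales to
`t = 1`, and one with `t = 0` can first be pushed slightly towards the Slater point `(x̄, 1)`.
By Dines' theorem the joint range of `(F, H)` is a convex cone in `ℝ²`; it misses the open
negative quadrant, so a line separates the two, giving `α F + β H ≥ 0` with `α, β ≥ 0` not both
zero. Evaluating at `(x̄, 1)` forces `α > 0`, and `μ = β / α` works.
-/

open Matrix

open Filter Topology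

theorem exists_nonneg_mul_self_add_mul_eq {a c : ℝ} (ha : 0 < a) (hc : 0 ≤ c) (b : ℝ) :
    ∃ r, 0 ≤ r ∧ a * (r * r) + b * r = c := by
  set s := √(b ^ 2 + 4 * a * c)
  have hs : s * s = b ^ 2 + 4 * a * c := Real.mul_self_sqrt (by positivity)
  have hbs : b ≤ s := (le_abs_self b).trans (Real.abs_le_sqrt (by nlinarith))
  refine ⟨(s - b) / (2 * a), div_nonneg (by linarith) (by positivity), ?_⟩
  field_simp
  linear_combination hs

namespace QuadraticMap

theorem map_add_smul {R V W : Type*} [CommRing R] [AddCommGroup V] [Module R V] [AddCommGroup W]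
    [Module R W] (Q : QuadraticMap R V W) (x y : V) (r : R) :
    Q (x + r • y) = Q x + r • polar Q x y + (r * r) • Q y := by
  rw [← polar_smul_right, ← Q.map_smul, polar]
  abel

variable {V W : Type*} [AddCommGroup V] [Module ℝ V] [AddCommGroup W] [Module ℝ W]

theorem continuous_apply_add_smul [TopologicalSpace W] [IsTopologicalAddGroup W]
    [ContinuousSMul ℝ W] (Q : QuadraticMap ℝ V W) (x y : V) :
    Continuous fun r : ℝ => Q (x + r • y) := by
  simp only [map_add_smul]
  fun_prop

theorem exists_apply_eq_smul (Q : QuadraticMap ℝ V W) {c : ℝ} (hc : 0 ≤ c) (v : V) :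
    ∃ z, Q z = c • Q v :=
  ⟨√c • v, by rw [Q.map_smul, Real.mul_self_sqrt hc]⟩

theorem exists_apply_eq_smul_add_smul_of_eq_smul (Q : QuadraticMap ℝ V W) {x y : V} {μ : ℝ}
    (h : Q y = μ • Q x) {a b : ℝ} (ha : 0 ≤ a) (hb : 0 ≤ b) :
    ∃ z, Q z = a • Q x + b • Q y := by
  have hcomb : a • Q x + b • Q y = (a + b * μ) • Q x := by
    rw [h]
    module
  rcases le_or_gt 0 (a + b * μ) with hpos | hneg
  · simpa [hcomb] using Q.exists_apply_eq_smul hpos x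
  · have hμ : μ < 0 := by nlinarith
    obtain ⟨z, hz⟩ := Q.exists_apply_eq_smul (div_nonneg_of_nonpos hneg.le hμ.le) y
    refine ⟨z, ?_⟩
    rw [hz, hcomb, h, smul_smul, div_mul_cancel₀ _ hμ.ne]

/- On the ray `x + r • y`, `r ≥ 0`, `Q` equals `(1 + p r) • Q x + (r² + q r) • Q y`; `p ≥ 0` keeps
the first coefficient positive, so rescaling hits `a • Q x + b • Q y` once the ratio of the
coefficients is `b / a`. -/
theorem exists_apply_eq_smul_add_smul_of_polar_eq (Q : QuadraticMap ℝ V W) {x y : V} {p q : ℝ}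
    (hp : 0 ≤ p) (hpolar : polar Q x y = p • Q x + q • Q y) {a b : ℝ} (ha : 0 < a)
    (hb : 0 ≤ b) : ∃ z, Q z = a • Q x + b • Q y := by
  obtain ⟨r, hr, hroot⟩ := exists_nonneg_mul_self_add_mul_eq ha hb (a * q - b * p)
  have hc : 0 < 1 + p * r := by positivity
  refine ⟨√(a / (1 + p * r)) • (x + r • y), ?_⟩
  rw [Q.map_smul, Real.mul_self_sqrt (by positivity), map_add_smul, hpolar]
  match_scalars
  · field_simp
  · field_simp
    linear_combination hroot

theorem exists_apply_eq_smul_add_smul (Q : QuadraticMap ℝ V W) (hW : Module.finrank ℝ W = 2)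
    (x y : V) {a b : ℝ} (ha : 0 ≤ a) (hb : 0 ≤ b) : ∃ z, Q z = a • Q x + b • Q y := by
  rcases ha.eq_or_lt with rfl | ha
  · simpa using Q.exists_apply_eq_smul hb y
  by_cases hx : Q x = 0
  · simpa [hx] using Q.exists_apply_eq_smul hb y
  by_cases hind : LinearIndependent ℝ ![Q x, Q y]
  · have hspan : polar Q x y ∈ Submodule.span ℝ {Q x, Q y} := by
      rw [← Matrix.range_cons_cons_empty _ _ ![],
        hind.span_eq_top_of_card_eq_finrank (by simp [hW])]
      exact Submodule.mem_top
    obtain ⟨p, q, hpq⟩ := Submodule.mem_span_pair.mp hspan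
    rcases le_total 0 p with hp | hp
    · exact Q.exists_apply_eq_smul_add_smul_of_polar_eq hp hpq.symm ha hb
    · have hpolar : polar Q x (-y) = -p • Q x + -q • Q (-y) := by
        rw [polar_neg_right, ← hpq, Q.map_neg]
        module
      simpa [Q.map_neg] using
        Q.exists_apply_eq_smul_add_smul_of_polar_eq (neg_nonneg.mpr hp) hpolar ha hb
  · obtain ⟨μ, hμ⟩ : ∃ μ : ℝ, μ • Q x = Q y := by
      simpa [LinearIndependent.pair_iff' hx] using hind
    exact Q.exists_apply_eq_smul_add_smul_of_eq_smul hμ.symm ha.le hb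

/-- Dines' theorem. -/
theorem convex_range (Q : QuadraticMap ℝ V W) (hW : Module.finrank ℝ W = 2) :
    Convex ℝ (Set.range Q) := by
  rintro _ ⟨x, rfl⟩ _ ⟨y, rfl⟩ a b ha hb -
  exact Q.exists_apply_eq_smul_add_smul hW x y ha hb

end QuadraticMap

theorem exists_nonneg_dual_of_disjoint_neg_quadrant {S : Set (ℝ × ℝ)} (hconv : Convex ℝ S)
    (h0 : (0 : ℝ × ℝ) ∈ S) (hcone : ∀ c : ℝ, 0 < c → ∀ p ∈ S, c • p ∈ S)
    (hdisj : Disjoint (Set.Iio 0 ×ˢ Set.Iio 0) S) :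
    ∃ α β : ℝ, 0 ≤ α ∧ 0 ≤ β ∧ 0 < α + β ∧ ∀ p ∈ S, 0 ≤ α * p.1 + β * p.2 := by
  obtain ⟨φ, u, hC, hS⟩ := geometric_hahn_banach_open ((convex_Iio 0).prod (convex_Iio 0))
    (isOpen_Iio.prod isOpen_Iio) hconv hdisj
  have hu : u ≤ 0 := by simpa using hS 0 h0
  have hφ : ∀ p : ℝ × ℝ, φ p = φ (1, 0) * p.1 + φ (0, 1) * p.2 := fun p => by
    conv_lhs => rw [show p = p.1 • (1, 0) + p.2 • (0, 1) by ext <;> simp]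
    rw [map_add, map_smul, map_smul, smul_eq_mul, smul_eq_mul, mul_comm, mul_comm p.2]
  have hquad : ∀ p ∈ Set.Iic 0 ×ˢ Set.Iic 0, φ p ≤ 0 := by
    have : closure (Set.Iio (0 : ℝ) ×ˢ Set.Iio 0) ⊆ {p | φ p ≤ 0} :=
      closure_minimal (fun p hp => (hC p hp).le.trans hu)
        (isClosed_le φ.continuous continuous_const)
    rw [closure_prod_eq, closure_Iio] at this
    exact fun p hp => this hp
  refine ⟨φ (1, 0), φ (0, 1), ?_, ?_, ?_, fun p hp => ?_⟩
  · have := hquad (-1, 0) (by simp)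
    rw [hφ] at this
    linarith
  · have := hquad (0, -1) (by simp)
    rw [hφ] at this
    linarith
  · have := hC (-1, -1) (by simp)
    rw [hφ] at this
    linarith
  · rw [← hφ]
    by_contra! hneg
    have hc : 0 < (u - 1) / φ p := div_pos_of_neg_of_neg (by linarith) hneg
    have := hS _ (hcone _ hc p hp)
    rw [map_smul, smul_eq_mul, div_mul_cancel₀ _ hneg.ne] at this
    linarith

theorem QuadraticForm.exists_nonneg_combination_nonneg {V : Type*} [AddCommGroup V]
    [Module ℝ V] (Q₁ Q₂ : QuadraticForm ℝ V) (h : ¬∃ v, Q₁ v < 0 ∧ Q₂ v < 0) :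
    ∃ α β : ℝ, 0 ≤ α ∧ 0 ≤ β ∧ 0 < α + β ∧ ∀ v, 0 ≤ α * Q₁ v + β * Q₂ v := by
  let Q : QuadraticMap ℝ V (ℝ × ℝ) :=
    (LinearMap.inl ℝ ℝ ℝ).compQuadraticMap Q₁ + (LinearMap.inr ℝ ℝ ℝ).compQuadraticMap Q₂
  have hQ : ∀ v, Q v = (Q₁ v, Q₂ v) := by simp [Q]
  obtain ⟨α, β, hα, hβ, hαβ, hS⟩ := exists_nonneg_dual_of_disjoint_neg_quadrant
    (Q.convex_range (by simp)) ⟨0, Q.map_zero⟩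
    (by rintro c hc _ ⟨v, rfl⟩; exact Q.exists_apply_eq_smul hc.le v)
    (Set.disjoint_left.mpr fun p hp ⟨v, hv⟩ => h ⟨v, by simpa [← hv, hQ] using hp⟩)
  exact ⟨α, β, hα, hβ, hαβ, fun v => by simpa [hQ] using hS _ ⟨v, rfl⟩⟩

section Homogenization

variable {n : ℕ}

noncomputable def homogenization (M : Matrix (Fin n) (Fin n) ℝ) (m : Fin n → ℝ) (r : ℝ) :
    QuadraticForm ℝ ((Fin n → ℝ) × ℝ) :=
  M.toQuadraticForm'.comp (LinearMap.fst ℝ _ ℝ)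
    + (2 : ℝ) • QuadraticMap.linMulLin (LinearMap.snd ℝ _ ℝ)
      (dotProductBilin ℝ ℝ m ∘ₗ LinearMap.fst ℝ _ ℝ)
    + r • QuadraticMap.sq.comp (LinearMap.snd ℝ _ ℝ)

theorem homogenization_apply (M : Matrix (Fin n) (Fin n) ℝ) (m : Fin n → ℝ) (r : ℝ)
    (x : Fin n → ℝ) (t : ℝ) :
    homogenization M m r (x, t) = x ⬝ᵥ M *ᵥ x + 2 * t * (m ⬝ᵥ x) + r * t ^ 2 := by
  simp only [homogenization, toQuadraticForm', _root_.add_apply, QuadraticMap.comp_apply,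
    LinearMap.fst_apply, LinearMap.BilinMap.toQuadraticMap_apply, toLinearMap₂'_apply',
    _root_.smul_apply, QuadraticMap.linMulLin_apply, LinearMap.snd_apply, LinearMap.coe_comp,
    Function.comp_apply, dotProductBilin_apply_apply, smul_eq_mul, QuadraticMap.sq_apply]
  ring

theorem homogenization_apply_one (M : Matrix (Fin n) (Fin n) ℝ) (m : Fin n → ℝ) (r : ℝ)
    (x : Fin n → ℝ) : homogenization M m r (x, 1) = qfun M m r x := by
  simp [homogenization_apply, qfun]

theorem homogenization_apply_of_ne_zero (M : Matrix (Fin n) (Fin n) ℝ) (m : Fin n → ℝ)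
    (r : ℝ) (x : Fin n → ℝ) {t : ℝ} (ht : t ≠ 0) :
    homogenization M m r (x, t) = t ^ 2 * qfun M m r (t⁻¹ • x) := by
  have hxt : (x, t) = t • (t⁻¹ • x, (1 : ℝ)) := by ext <;> simp [ht]
  rw [hxt, QuadraticMap.map_smul, homogenization_apply_one, smul_eq_mul, sq]

theorem not_exists_homogenization_neg {M N : Matrix (Fin n) (Fin n) ℝ} {m l : Fin n → ℝ}
    {r s : ℝ} (hSlater : ∃ xbar, qfun N l s xbar < 0)
    (h : ¬∃ x, qfun M m r x < 0 ∧ qfun N l s x ≤ 0) :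
    ¬∃ z, homogenization M m r z < 0 ∧ homogenization N l s z < 0 := by
  obtain ⟨xbar, hxbar⟩ := hSlater
  rintro ⟨⟨x, t⟩, hM, hN⟩
  wlog ht : t ≠ 0 generalizing x t
  · have hnear : ∀ Q : QuadraticForm ℝ ((Fin n → ℝ) × ℝ), Q (x, t) < 0 →
        ∀ᶠ ε in 𝓝 (0 : ℝ), Q ((x, t) + ε • (xbar, 1)) < 0 := fun Q hQ =>
      ((Q.continuous_apply_add_smul _ _).tendsto' 0 _ (by simp)).eventually_lt_const hQ
    obtain ⟨ε, ⟨hMε, hNε⟩, hε⟩ :=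
      (((hnear _ hM).and (hnear _ hN)).filter_mono nhdsWithin_le_nhds).and
        self_mem_nhdsWithin |>.exists (f := 𝓝[≠] (0 : ℝ))
    obtain rfl : t = 0 := not_not.mp ht
    exact this (x + ε • xbar) ε (by simpa using hMε) (by simpa using hNε) hε
  rw [homogenization_apply_of_ne_zero _ _ _ _ ht] at hM hN
  have ht2 : 0 < t ^ 2 := by positivity
  exact h ⟨t⁻¹ • x, neg_of_mul_neg_right hM ht2.le, (neg_of_mul_neg_right hN ht2.le).le⟩

end Homogenization

theorem s_lemma_general (n : ℕ)
    (A B : Matrix (Fin n) (Fin n) ℝ)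
    (a b : Fin n → ℝ) (c d : ℝ)
    (hSlater : ∃ xbar : Fin n → ℝ, qfun B b d xbar < 0) :
    (¬ ∃ x : Fin n → ℝ, qfun A a c x < 0 ∧ qfun B b d x ≤ 0) ↔
      (∃ μ : ℝ, 0 ≤ μ ∧ ∀ x : Fin n → ℝ, qfun A a c x + μ * qfun B b d x ≥ 0) := by
  constructor
  · intro h
    obtain ⟨α, β, hα, hβ, hαβ, hcomb⟩ := QuadraticForm.exists_nonneg_combination_nonneg _ _
      (not_exists_homogenization_neg hSlater h)
    have hqfun : ∀ x, 0 ≤ α * qfun A a c x + β * qfun B b d x := fun x => by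
      simpa only [homogenization_apply_one] using hcomb (x, 1)
    obtain ⟨xbar, hxbar⟩ := hSlater
    have hα : 0 < α := by
      refine hα.lt_of_ne fun hα0 => ?_
      have hslater := hqfun xbar
      rw [← hα0, zero_mul, zero_add] at hslater
      linarith [mul_neg_of_pos_of_neg (by linarith : 0 < β) hxbar]
    refine ⟨β / α, by positivity, fun x => ?_⟩
    have hx := hqfun x
    calc qfun A a c x + β / α * qfun B b d x
        = (α * qfun A a c x + β * qfun B b d x) / α := by field_simp
      _ ≥ 0 := by positivity
  · rintro ⟨μ, hμ, hμnonneg⟩ ⟨x, hfx, hhx⟩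
    nlinarith [hμnonneg x]

/-- The S-lemma of Yakubovich. -/
theorem s_lemma (n : ℕ) (hn : 0 < n)
    (A B : Matrix (Fin n) (Fin n) ℝ) (hA : A.IsSymm) (hB : B.IsSymm)
    (a b : Fin n → ℝ) (c d : ℝ)
    (hSlater : ∃ xbar : Fin n → ℝ, qfun B b d xbar < 0) :
    (¬ ∃ x : Fin n → ℝ, qfun A a c x < 0 ∧ qfun B b d x ≤ 0) ↔
      (∃ μ : ℝ, 0 ≤ μ ∧ ∀ x : Fin n → ℝ, qfun A a c x + μ * qfun B b d x ≥ 0) :=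
  s_lemma_general n A B a b c d hSlater
end

section
/- (Polyak) Suppose n ≥ 3, f_i(x) = xᵀA_i x for real symmetric n×n matrices A_0, A_1, A_2, and α_0, α_1, α_2 are real numbers. Suppose there exist μ_1, μ_2 ∈ ℝ with μ_1 A_1 + μ_2 A_2 positive definite, and there exists x⁰ ∈ ℝⁿ with f_1(x⁰) < α_1 and f_2(x⁰) < α_2. Then the system f_0(x) < α_0, f_1(x) ≤ α_1, f_2(x) ≤ α_2 has no solution x ∈ ℝⁿ if and only if there exist τ_1 ≥ 0 and τ_2 ≥ 0 such that A_0 + τ_1 A_1 + τ_2 A_2 is positive semidefinite and α_0 + τ_1 α_1 + τ_2 α_2 ≤ 0. -/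
/-!
Polyak's convexity theorem does the work: for `n ≥ 3`, if some `μ₁ A₁ + μ₂ A₂` is positive
definite, the joint range of `F = (f₀, f₁, f₂)` is a convex cone. If the system is infeasible,
this range misses the open orthant `{u | u < α}`, and a separating hyperplane has a nonnegative
normal `c` with `c ⬝ α ≤ 0 ≤ c ⬝ F x` for all `x`; the Slater point forces `c₀ > 0`, and
`τ = (c₁, c₂) / c₀`.

For the convexity, rotate `(A₁, A₂)` so that the middle form `B` is positive definite. Given a
convex combination `c` of two values `F y`, `F z`, it suffices to find `x ≠ 0` with `F x` on the
ray of `c`, i.e. a common isotropic vector of two forms `R₁, R₂` with opposite values at `y` and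
`z`. Let `Q` be the form vanishing exactly where `(R₁, R₂)` is parallel to `d = (R₁, R₂)(y)`. In
dimension `≥ 3` any two nonzero `Q`-isotropic vectors are joined, up to sign, by a path of such
vectors; along it the coordinate of `(R₁, R₂)` in the direction `d` changes sign, and the
intermediate value theorem gives `x`.
-/

open Matrix
open Module Set Filter Topology
open LinearMap (BilinForm)

lemma nonpos_and_le_of_forall_pos_add_mul_le {a b w : ℝ} (h : ∀ t > 0, a + t * b ≤ w) :
    b ≤ 0 ∧ a ≤ w := by
  refine ⟨?_, ?_⟩
  · by_contra! hb
    have := h ((|w - a| + 1) / b) (by positivity)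
    rw [div_mul_cancel₀ _ hb.ne'] at this
    linarith [le_abs_self (w - a)]
  · have hlim : Tendsto (fun t => a + t * b) (𝓝[>] 0) (𝓝 a) := by
      have hcont : Continuous fun t : ℝ => a + t * b := by fun_prop
      simpa using (hcont.tendsto 0).mono_left nhdsWithin_le_nhds
    exact le_of_tendsto hlim (eventually_nhdsWithin_of_forall h)

lemma ContinuousLinearMap.apply_prod_prod (f : ℝ × ℝ × ℝ →L[ℝ] ℝ) (v : ℝ × ℝ × ℝ) :
    f v = f (1, 0, 0) * v.1 + f (0, 1, 0) * v.2.1 + f (0, 0, 1) * v.2.2 := by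
  obtain ⟨p, q, r⟩ := v
  have hv : ((p, q, r) : ℝ × ℝ × ℝ) = p • (1, 0, 0) + q • (0, 1, 0) + r • (0, 0, 1) := by
    ext <;> simp
  conv_lhs => rw [hv, map_add, map_add, map_smul, map_smul, map_smul]
  simp only [smul_eq_mul]
  ring

lemma nonneg_and_le_of_forall_lt {c₀ c₁ c₂ α₀ α₁ α₂ w : ℝ}
    (h : ∀ p q r, p < α₀ → q < α₁ → r < α₂ → c₀ * p + c₁ * q + c₂ * r < w) :
    0 ≤ c₀ ∧ 0 ≤ c₁ ∧ 0 ≤ c₂ ∧ c₀ * α₀ + c₁ * α₁ + c₂ * α₂ ≤ w := by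
  set m := c₀ * (α₀ - 1) + c₁ * (α₁ - 1) + c₂ * (α₂ - 1)
  have hm : ∀ b, (∀ t > 0, m + t * b ≤ w) → b ≤ 0 :=
    fun _ hb => (nonpos_and_le_of_forall_pos_add_mul_le hb).1
  -- send one coordinate of a point of the orthant to `-∞`, resp. the point to the corner `α`
  refine ⟨neg_nonpos.mp (hm _ fun t ht => ?_), neg_nonpos.mp (hm _ fun t ht => ?_),
    neg_nonpos.mp (hm _ fun t ht => ?_),
    (nonpos_and_le_of_forall_pos_add_mul_le (b := -(c₀ + c₁ + c₂)) fun t ht => ?_).2⟩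
  · linarith [h (α₀ - 1 - t) (α₁ - 1) (α₂ - 1) (by linarith) (by linarith) (by linarith)]
  · linarith [h (α₀ - 1) (α₁ - 1 - t) (α₂ - 1) (by linarith) (by linarith) (by linarith)]
  · linarith [h (α₀ - 1) (α₁ - 1) (α₂ - 1 - t) (by linarith) (by linarith) (by linarith)]
  · linarith [h (α₀ - t) (α₁ - t) (α₂ - t) (by linarith) (by linarith) (by linarith)]

namespace LinearMap.BilinForm

section Algebra

variable {V : Type*} [AddCommGroup V] [Module ℝ V]

lemma apply_smul_smul_self (B : BilinForm ℝ V) (k : ℝ) (x : V) :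
    B (k • x) (k • x) = k ^ 2 * B x x := by
  simp only [map_smul, LinearMap.smul_apply, smul_eq_mul]; ring

def isotropicVectors (Q : BilinForm ℝ V) : Set V := {x | x ≠ 0 ∧ Q x x = 0}

lemma exists_ne_zero_orthogonal [FiniteDimensional ℝ V] (hV : 3 ≤ finrank ℝ V)
    (Q : BilinForm ℝ V) (y z : V) : ∃ u ≠ 0, Q y u = 0 ∧ Q z u = 0 := by
  have hker := LinearMap.ker_ne_bot_of_finrank_lt (f := (Q y).prod (Q z))
    (by rw [finrank_prod, finrank_self]; omega)
  obtain ⟨u, hu, hu0⟩ := Submodule.exists_mem_ne_zero_of_ne_bot hker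
  exact ⟨u, hu0, congrArg Prod.fst hu, congrArg Prod.snd hu⟩

lemma linearIndependent_pair_of_orthogonal {Q : BilinForm ℝ V} {y z u : V} (hu : u ≠ 0)
    (hzu : Q z u = 0) (hzy : Q z y ≠ 0) : LinearIndependent ℝ ![y, u] := by
  refine LinearIndependent.pair_iff.mpr fun s t h => ?_
  have hs : s * Q z y = 0 := by simpa [hzu] using congrArg (Q z) h
  obtain rfl := (mul_eq_zero.mp hs).resolve_right hzy
  rw [zero_smul, zero_add] at h
  exact ⟨rfl, (smul_eq_zero.mp h).resolve_right hu⟩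

section SLemma

variable {B₀ B₁ B₂ : BilinForm ℝ V} {α₀ α₁ α₂ : ℝ}

theorem exists_multipliers_of_convex_range
    (hconv : Convex ℝ (Set.range fun x => (B₀ x x, B₁ x x, B₂ x x)))
    (hinf : ¬ ∃ x, B₀ x x < α₀ ∧ B₁ x x ≤ α₁ ∧ B₂ x x ≤ α₂) :
    ∃ c₀ c₁ c₂ : ℝ, 0 ≤ c₀ ∧ 0 ≤ c₁ ∧ 0 ≤ c₂ ∧ ¬(c₀ = 0 ∧ c₁ = 0 ∧ c₂ = 0) ∧
      c₀ * α₀ + c₁ * α₁ + c₂ * α₂ ≤ 0 ∧ ∀ x, 0 ≤ c₀ * B₀ x x + c₁ * B₁ x x + c₂ * B₂ x x := by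
  have hdisj : Disjoint (Iio α₀ ×ˢ Iio α₁ ×ˢ Iio α₂)
      (Set.range fun x => (B₀ x x, B₁ x x, B₂ x x)) := by
    refine Set.disjoint_left.mpr ?_
    rintro _ ⟨h₀, h₁, h₂⟩ ⟨x, rfl⟩
    exact hinf ⟨x, h₀, le_of_lt h₁, le_of_lt h₂⟩
  obtain ⟨f, w, hS, hT⟩ := geometric_hahn_banach_open
    ((convex_Iio α₀).prod ((convex_Iio α₁).prod (convex_Iio α₂)))
    (isOpen_Iio.prod (isOpen_Iio.prod isOpen_Iio)) hconv hdisj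
  set c₀ := f (1, 0, 0)
  set c₁ := f (0, 1, 0)
  set c₂ := f (0, 0, 1)
  have hS' : ∀ p q r, p < α₀ → q < α₁ → r < α₂ → c₀ * p + c₁ * q + c₂ * r < w := by
    intro p q r hp hq hr
    have := hS (p, q, r) ⟨hp, hq, hr⟩
    rwa [f.apply_prod_prod] at this
  have hT' : ∀ x, w ≤ c₀ * B₀ x x + c₁ * B₁ x x + c₂ * B₂ x x := fun x => by
    have := hT _ ⟨x, rfl⟩
    rwa [f.apply_prod_prod] at this
  have hw : w ≤ 0 := by simpa using hT' 0
  obtain ⟨hc₀, hc₁, hc₂, hα⟩ := nonneg_and_le_of_forall_lt hS'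
  -- the range is a cone, so the affine bound `w ≤ ⋯` on it is a linear one
  have hnonneg : ∀ x, 0 ≤ c₀ * B₀ x x + c₁ * B₁ x x + c₂ * B₂ x x := by
    intro x
    refine neg_nonpos.mp (nonpos_and_le_of_forall_pos_add_mul_le (a := 0) (w := -w)
      fun t ht => ?_).1
    have := hT' (√t • x)
    simp only [apply_smul_smul_self, Real.sq_sqrt ht.le] at this
    linarith
  refine ⟨c₀, c₁, c₂, hc₀, hc₁, hc₂, fun ⟨h₀, h₁, h₂⟩ => ?_, hα.trans hw, hnonneg⟩
  have := hS' (α₀ - 1) (α₁ - 1) (α₂ - 1) (by linarith) (by linarith) (by linarith)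
  simp only [h₀, h₁, h₂, zero_mul, add_zero] at this
  linarith

theorem s_lemma_of_convex_range
    (hconv : Convex ℝ (Set.range fun x => (B₀ x x, B₁ x x, B₂ x x)))
    (hslater : ∃ x₀, B₁ x₀ x₀ < α₁ ∧ B₂ x₀ x₀ < α₂) :
    (¬ ∃ x, B₀ x x < α₀ ∧ B₁ x x ≤ α₁ ∧ B₂ x x ≤ α₂) ↔
      ∃ τ₁ τ₂ : ℝ, 0 ≤ τ₁ ∧ 0 ≤ τ₂ ∧ (∀ x, 0 ≤ B₀ x x + τ₁ * B₁ x x + τ₂ * B₂ x x) ∧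
        α₀ + τ₁ * α₁ + τ₂ * α₂ ≤ 0 := by
  refine ⟨fun hinf => ?_, ?_⟩
  · obtain ⟨c₀, c₁, c₂, hc₀, hc₁, hc₂, hne, hα, hnonneg⟩ :=
      exists_multipliers_of_convex_range hconv hinf
    obtain ⟨x₀, hx₁, hx₂⟩ := hslater
    have hc₀ : 0 < c₀ := by
      refine hc₀.lt_of_ne' fun h₀ => hne ⟨h₀, ?_, ?_⟩
      all_goals
        have := hnonneg x₀
        rw [h₀] at this hα
        nlinarith
    refine ⟨c₁ / c₀, c₂ / c₀, by positivity, by positivity, fun x => ?_, ?_⟩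
    · have := hnonneg x
      rw [show B₀ x x + c₁ / c₀ * B₁ x x + c₂ / c₀ * B₂ x x =
        (c₀ * B₀ x x + c₁ * B₁ x x + c₂ * B₂ x x) / c₀ by field_simp]
      positivity
    · rw [show α₀ + c₁ / c₀ * α₁ + c₂ / c₀ * α₂ = (c₀ * α₀ + c₁ * α₁ + c₂ * α₂) / c₀ by
        field_simp]
      exact div_nonpos_of_nonpos_of_nonneg hα hc₀.le
  · rintro ⟨τ₁, τ₂, hτ₁, hτ₂, hnonneg, hα⟩ ⟨x, hx₀, hx₁, hx₂⟩
    nlinarith [hnonneg x, mul_le_mul_of_nonneg_left hx₁ hτ₁, mul_le_mul_of_nonneg_left hx₂ hτ₂]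

end SLemma

end Algebra

section Paths

variable {V : Type*} [AddCommGroup V] [Module ℝ V] [TopologicalSpace V]
  [IsTopologicalAddGroup V] [ContinuousSMul ℝ V] {Q : BilinForm ℝ V}

lemma joinedIn_isotropicVectors_smul {y : V} (hy : y ∈ Q.isotropicVectors) {k : ℝ}
    (hk : 0 < k) : JoinedIn Q.isotropicVectors y (k • y) := by
  refine JoinedIn.of_segment_subset ?_
  rw [segment_eq_image]
  rintro _ ⟨t, ⟨ht₀, ht₁⟩, rfl⟩
  dsimp only
  rw [smul_smul, ← add_smul]
  have hpos : 0 < 1 - t + t * k := by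
    rcases ht₀.eq_or_lt with rfl | ht
    · simp
    · nlinarith [mul_pos ht hk]
  exact ⟨smul_ne_zero hpos.ne' hy.1, by rw [apply_smul_smul_self, hy.2, mul_zero]⟩

lemma joinedIn_isotropicVectors_of_linearIndependent (hQ : Q.IsSymm) {a b : V}
    (ha : Q a a = 0) (hb : Q b b = 0) (hab : Q a b = 0) (hind : LinearIndependent ℝ ![a, b]) :
    JoinedIn Q.isotropicVectors a b := by
  have hba : Q b a = 0 := (hQ.eq b a).trans hab
  refine JoinedIn.of_segment_subset ?_
  rw [segment_eq_image]
  rintro _ ⟨t, -, rfl⟩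
  refine ⟨fun h => ?_, ?_⟩
  · have := LinearIndependent.pair_iff.mp hind _ _ h
    linarith [this.1, this.2]
  · simp [ha, hb, hab, hba]

lemma joinedIn_isotropicVectors_of_anisotropic (hQ : Q.IsSymm) {y z u : V}
    (hy : y ∈ Q.isotropicVectors) (hz : Q z z = 0) (hyu : Q y u = 0) (hzu : Q z u = 0)
    (hneg : Q y z * Q u u < 0) : JoinedIn Q.isotropicVectors y z := by
  have huy : Q u y = 0 := (hQ.eq u y).trans hyu
  have huz : Q u z = 0 := (hQ.eq u z).trans hzu
  have hyz : Q y z ≠ 0 := left_ne_zero_of_mul hneg.ne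
  have huu : Q u u ≠ 0 := right_ne_zero_of_mul hneg.ne
  have hzy : Q z y = Q y z := hQ.eq z y
  have hexp : ∀ a b c : ℝ, Q (a • y + b • z + c • u) (a • y + b • z + c • u) =
      2 * a * b * Q y z + c ^ 2 * Q u u := by
    intro a b c
    simp only [map_add, map_smul, LinearMap.add_apply, LinearMap.smul_apply, smul_eq_mul,
      hy.2, hz, hyu, hzu, huy, huz, hzy]
    ring
  -- the `u`-component cancels the cross term: `K * Q u u = -2 * Q y z`
  set K := -2 * Q y z / Q u u with hK
  have hKpos : 0 < K := by
    rw [hK, show -2 * Q y z / Q u u = -2 * (Q y z * Q u u) / Q u u ^ 2 by field_simp]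
    exact div_pos (by linarith) (by positivity)
  have hKu : K * Q u u = -2 * Q y z := div_mul_cancel₀ _ huu
  let γ : ℝ → V := fun t => (1 - t) • y + t • z + √(K * (t * (1 - t))) • u
  have hγ : ∀ t ∈ Icc (0 : ℝ) 1, γ t ∈ Q.isotropicVectors := by
    rintro t ⟨ht₀, ht₁⟩
    have hsq : √(K * (t * (1 - t))) ^ 2 = K * (t * (1 - t)) :=
      Real.sq_sqrt (by have := mul_nonneg ht₀ (sub_nonneg.2 ht₁); positivity)
    refine ⟨fun h => hy.1 ?_, ?_⟩
    · have ht : t * Q y z = 0 := by simpa [γ, hy.2, hyu] using congrArg (Q y) h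
      obtain rfl := (mul_eq_zero.mp ht).resolve_right hyz
      simpa [γ] using h
    · rw [hexp, hsq]
      linear_combination (t * (1 - t)) * hKu
  exact ⟨⟨⟨fun t => γ t, by fun_prop⟩, by simp [γ], by simp [γ]⟩, fun t => hγ t t.2⟩

theorem joinedIn_isotropicVectors [FiniteDimensional ℝ V] (hV : 3 ≤ finrank ℝ V)
    (hQ : Q.IsSymm) {y z : V} (hy : y ∈ Q.isotropicVectors) (hz : z ∈ Q.isotropicVectors) :
    JoinedIn Q.isotropicVectors y z ∨ JoinedIn Q.isotropicVectors y (-z) := by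
  by_cases hind : LinearIndependent ℝ ![y, z]
  swap
  · obtain ⟨c, rfl⟩ : ∃ c : ℝ, c • y = z := by
      simpa [LinearIndependent.pair_iff' hy.1] using hind
    have hc : c ≠ 0 := by rintro rfl; exact hz.1 (zero_smul ℝ y)
    rcases hc.lt_or_gt with hc | hc
    · exact Or.inr (by simpa using joinedIn_isotropicVectors_smul hy (neg_pos.2 hc))
    · exact Or.inl (joinedIn_isotropicVectors_smul hy hc)
  by_cases hyz : Q y z = 0
  · exact Or.inl (joinedIn_isotropicVectors_of_linearIndependent hQ hy.2 hz.2 hyz hind)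
  obtain ⟨u, hu, hyu, hzu⟩ := exists_ne_zero_orthogonal hV Q y z
  by_cases huu : Q u u = 0
  · -- `u` is independent of `y` and of `z` since it is orthogonal to both while `Q y z ≠ 0`
    have hyu_ind := linearIndependent_pair_of_orthogonal hu hzu ((hQ.eq z y).trans_ne hyz)
    have huz_ind :=
      LinearIndependent.pair_symm_iff.mp (linearIndependent_pair_of_orthogonal hu hyu hyz)
    exact Or.inl ((joinedIn_isotropicVectors_of_linearIndependent hQ hy.2 huu hyu hyu_ind).trans
      (joinedIn_isotropicVectors_of_linearIndependent hQ huu hz.2 ((hQ.eq u z).trans hzu) huz_ind))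
  · rcases (mul_ne_zero hyz huu).lt_or_gt with h | h
    · exact Or.inl (joinedIn_isotropicVectors_of_anisotropic hQ hy hz.2 hyu hzu h)
    · refine Or.inr (joinedIn_isotropicVectors_of_anisotropic hQ hy (by simpa using hz.2) hyu
        (by simpa using hzu) (by simpa using h))

end Paths

section Normed

variable {V : Type*} [NormedAddCommGroup V] [NormedSpace ℝ V] [FiniteDimensional ℝ V]

lemma continuous_apply_self (Q : BilinForm ℝ V) : Continuous fun x => Q x x :=
  Q.toContinuousBilinearMap.continuous₂.comp (continuous_id.prodMk continuous_id)

theorem exists_common_isotropic_of_opposite (hV : 3 ≤ finrank ℝ V) {R₁ R₂ : BilinForm ℝ V}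
    (hR₁ : R₁.IsSymm) (hR₂ : R₂.IsSymm) {y z : V} (hy : y ≠ 0) (hz : z ≠ 0) {a b : ℝ}
    (ha : 0 < a) (hb : 0 < b) (h₁ : a * R₁ y y + b * R₁ z z = 0)
    (h₂ : a * R₂ y y + b * R₂ z z = 0) : ∃ x ≠ 0, R₁ x x = 0 ∧ R₂ x x = 0 := by
  set d₁ := R₁ y y
  set d₂ := R₂ y y
  by_cases hd : d₁ = 0 ∧ d₂ = 0
  · exact ⟨y, hy, hd⟩
  have hdd : 0 < d₁ ^ 2 + d₂ ^ 2 := by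
    rcases not_and_or.mp hd with h | h <;> positivity
  -- `Q x x = 0` iff `(R₁ x x, R₂ x x)` is parallel to `d`; `H x x` is its coordinate along `d`
  set Q := d₂ • R₁ - d₁ • R₂
  set H := d₁ • R₁ + d₂ • R₂
  have hQ : Q.IsSymm := (hR₁.smul d₂).sub (hR₂.smul d₁)
  have hQy : Q y y = 0 := by simp [Q]; ring
  have hQz : Q z z = 0 := by
    refine (mul_eq_zero.mp ?_).resolve_left hb.ne'
    simp only [Q, LinearMap.sub_apply, LinearMap.smul_apply, smul_eq_mul]
    linear_combination d₂ * h₁ - d₁ * h₂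
  obtain ⟨w, hHw, γ, hγ⟩ : ∃ w, H w w = H z z ∧ JoinedIn Q.isotropicVectors y w := by
    rcases joinedIn_isotropicVectors hV hQ ⟨hy, hQy⟩ ⟨hz, hQz⟩ with h | h
    exacts [⟨z, rfl, h⟩, ⟨-z, by simp, h⟩]
  have hHy : H y y = d₁ ^ 2 + d₂ ^ 2 := by simp [H]; ring
  have hHz : b * H z z = -a * (d₁ ^ 2 + d₂ ^ 2) := by
    simp only [H, LinearMap.add_apply, LinearMap.smul_apply, smul_eq_mul]
    linear_combination d₁ * h₁ + d₂ * h₂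
  have h0 : (0 : ℝ) ∈ Icc (H (γ 1) (γ 1)) (H (γ 0) (γ 0)) := by
    rw [γ.source, γ.target]
    constructor <;> nlinarith
  obtain ⟨t, ht⟩ := intermediate_value_univ 1 0 (H.continuous_apply_self.comp γ.continuous) h0
  have ht : H (γ t) (γ t) = 0 := ht
  have hQt := (hγ t).2
  simp only [Q, H, LinearMap.add_apply, LinearMap.sub_apply, LinearMap.smul_apply,
    smul_eq_mul] at ht hQt
  refine ⟨γ t, (hγ t).1, ?_, ?_⟩
  · refine (mul_eq_zero.mp ?_).resolve_left hdd.ne'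
    linear_combination d₁ * ht + d₂ * hQt
  · refine (mul_eq_zero.mp ?_).resolve_left hdd.ne'
    linear_combination d₂ * ht - d₁ * hQt

theorem convex_range_of_posDef (hV : 3 ≤ finrank ℝ V) {P B G : BilinForm ℝ V}
    (hP : P.IsSymm) (hB : B.IsSymm) (hG : G.IsSymm) (hBpos : ∀ x ≠ 0, 0 < B x x) :
    Convex ℝ (Set.range fun x => (P x x, B x x, G x x)) := by
  set F : V → ℝ × ℝ × ℝ := fun x => (P x x, B x x, G x x)
  have hscale : ∀ (t : ℝ) x, 0 ≤ t → F (√t • x) = t • F x := by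
    intro t x ht
    simp only [F, apply_smul_smul_self, Real.sq_sqrt ht, Prod.smul_mk, smul_eq_mul]
  have hF0 : F 0 = 0 := by simp [F]
  rw [convex_iff_forall_pos]
  rintro _ ⟨y, rfl⟩ _ ⟨z, rfl⟩ a b ha hb -
  by_cases hy : y = 0
  · exact ⟨√b • z, by rw [hscale _ _ hb.le, hy, hF0, smul_zero, zero_add]⟩
  by_cases hz : z = 0
  · exact ⟨√a • y, by rw [hscale _ _ ha.le, hz, hF0, smul_zero, add_zero]⟩
  set c₀ := a * P y y + b * P z z
  set β := a * B y y + b * B z z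
  set c₂ := a * G y y + b * G z z
  have hβ : 0 < β := by have := hBpos y hy; have := hBpos z hz; positivity
  -- the common isotropic vectors of these two forms are the `x` with `(P, B, G)(x)` on the ray
  -- through `(c₀, β, c₂)`
  obtain ⟨x, hx, h₁, h₂⟩ := exists_common_isotropic_of_opposite hV
    ((hP.smul β).sub (hB.smul c₀)) ((hG.smul β).sub (hB.smul c₂)) hy hz ha hb
    (by simp only [LinearMap.sub_apply, LinearMap.smul_apply, smul_eq_mul]; ring)
    (by simp only [LinearMap.sub_apply, LinearMap.smul_apply, smul_eq_mul]; ring)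
  simp only [LinearMap.sub_apply, LinearMap.smul_apply, smul_eq_mul] at h₁ h₂
  have hBx := hBpos x hx
  refine ⟨√(β / B x x) • x, ?_⟩
  rw [hscale _ _ (by positivity)]
  simp only [F, Prod.smul_mk, Prod.mk_add_mk, smul_eq_mul, Prod.mk.injEq]
  refine ⟨?_, ?_, ?_⟩ <;> field_simp <;> linarith

theorem convex_range_of_definite_pencil (hV : 3 ≤ finrank ℝ V) {B₀ B₁ B₂ : BilinForm ℝ V}
    (h₀ : B₀.IsSymm) (h₁ : B₁.IsSymm) (h₂ : B₂.IsSymm) {μ₁ μ₂ : ℝ}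
    (hpos : ∀ x ≠ 0, 0 < (μ₁ • B₁ + μ₂ • B₂) x x) :
    Convex ℝ (Set.range fun x => (B₀ x x, B₁ x x, B₂ x x)) := by
  have : Nontrivial V := Module.nontrivial_of_finrank_pos (R := ℝ) (by omega)
  have hμ : μ₁ ^ 2 + μ₂ ^ 2 ≠ 0 := by
    obtain ⟨x, hx⟩ := exists_ne (0 : V)
    intro h
    have hμ₁ : μ₁ = 0 := by nlinarith
    have hμ₂ : μ₂ = 0 := by nlinarith
    simpa [hμ₁, hμ₂] using hpos x hx
  let L : ℝ × ℝ × ℝ → ℝ × ℝ × ℝ := fun v =>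
    (v.1, μ₁ * v.2.1 + μ₂ * v.2.2, -μ₂ * v.2.1 + μ₁ * v.2.2)
  have hL : IsLinearMap ℝ L :=
    ⟨fun v w => by ext <;> simp [L] <;> ring, fun c v => by ext <;> simp [L] <;> ring⟩
  have hLinj : Function.Injective L := by
    rintro ⟨p, q, r⟩ ⟨p', q', r'⟩ h
    simp only [L, Prod.mk.injEq] at h
    obtain ⟨rfl, hq, hr⟩ := h
    have hq' : (μ₁ ^ 2 + μ₂ ^ 2) * (q - q') = 0 := by linear_combination μ₁ * hq - μ₂ * hr
    have hr' : (μ₁ ^ 2 + μ₂ ^ 2) * (r - r') = 0 := by linear_combination μ₂ * hq + μ₁ * hr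
    rw [sub_eq_zero.mp ((mul_eq_zero.mp hq').resolve_left hμ),
      sub_eq_zero.mp ((mul_eq_zero.mp hr').resolve_left hμ)]
  have hrange : (Set.range fun x => (B₀ x x, B₁ x x, B₂ x x)) = L ⁻¹' Set.range fun x =>
      (B₀ x x, (μ₁ • B₁ + μ₂ • B₂) x x, (-μ₂ • B₁ + μ₁ • B₂) x x) := by
    ext v
    constructor
    · rintro ⟨x, rfl⟩
      exact ⟨x, by simp [L]⟩
    · rintro ⟨x, hx⟩
      exact ⟨x, hLinj (by simpa [L] using hx)⟩
  rw [hrange]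
  exact (convex_range_of_posDef hV h₀ ((h₁.smul μ₁).add (h₂.smul μ₂))
    ((h₁.smul (-μ₂)).add (h₂.smul μ₁)) hpos).is_linear_preimage hL

end Normed

end LinearMap.BilinForm

lemma Matrix.IsSymm.posSemidef_iff_forall_toBilin' {ι : Type*} [Fintype ι] [DecidableEq ι]
    {M : Matrix ι ι ℝ} (hM : M.IsSymm) : M.PosSemidef ↔ ∀ x, 0 ≤ toBilin' M x x := by
  simp [posSemidef_iff_dotProduct_mulVec, hM, toBilin'_apply']

open LinearMap.BilinForm in
/-- Polyak's S-procedure with two quadratic constraints. -/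
theorem polyak_s_procedure (n : ℕ) (hn : 3 ≤ n)
    (A₀ A₁ A₂ : Matrix (Fin n) (Fin n) ℝ)
    (hA₀ : A₀.IsSymm) (hA₁ : A₁.IsSymm) (hA₂ : A₂.IsSymm)
    (α₀ α₁ α₂ : ℝ)
    (hdef : ∃ μ₁ μ₂ : ℝ, (μ₁ • A₁ + μ₂ • A₂).PosDef)
    (hSlater : ∃ x0 : Fin n → ℝ, x0 ⬝ᵥ A₁ *ᵥ x0 < α₁ ∧ x0 ⬝ᵥ A₂ *ᵥ x0 < α₂) :
    (¬ ∃ x : Fin n → ℝ, x ⬝ᵥ A₀ *ᵥ x < α₀ ∧ x ⬝ᵥ A₁ *ᵥ x ≤ α₁ ∧ x ⬝ᵥ A₂ *ᵥ x ≤ α₂) ↔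
      (∃ τ₁ τ₂ : ℝ, 0 ≤ τ₁ ∧ 0 ≤ τ₂ ∧ (A₀ + τ₁ • A₁ + τ₂ • A₂).PosSemidef ∧
        α₀ + τ₁ * α₁ + τ₂ * α₂ ≤ 0) := by
  obtain ⟨μ₁, μ₂, hμ⟩ := hdef
  have hV : 3 ≤ finrank ℝ (Fin n → ℝ) := by rwa [finrank_fin_fun]
  have hconv := convex_range_of_definite_pencil hV (isSymm_toBilin'_iff_isSymm.mpr hA₀)
    (isSymm_toBilin'_iff_isSymm.mpr hA₁) (isSymm_toBilin'_iff_isSymm.mpr hA₂)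
    (μ₁ := μ₁) (μ₂ := μ₂) fun x hx => by
      rw [← map_smul, ← map_smul, ← map_add, toBilin'_apply']
      simpa using hμ.dotProduct_mulVec_pos hx
  simp only [← toBilin'_apply'] at hSlater ⊢
  rw [s_lemma_of_convex_range hconv hSlater]
  refine exists₂_congr fun τ₁ τ₂ => and_congr_right' (and_congr_right' (and_congr_left' ?_))
  rw [((hA₀.add (hA₁.smul τ₁)).add (hA₂.smul τ₂)).posSemidef_iff_forall_toBilin']
  simp
end

section
/- Suppose α < β are real numbers, B = 0, b ≠ 0, and V ∈ ℝ^{n×(n−1)} is a matrix whose columns form a basis of the null space {x ∈ ℝⁿ : bᵀx = 0}. Then the system f(x) < 0, α ≤ h(x) ≤ β has no solution x ∈ ℝⁿ if and only if there exists a real number ν ≥ 0 such that the (n+1)×(n+1) symmetric matrix with block form [[VᵀAV, (1/(2bᵀb))VᵀAb, Vᵀa], [(1/(2bᵀb))bᵀAV, bᵀAb/(2bᵀb)² + ν, aᵀb/(2bᵀb) − (ν/2)(α + β − 2d)], [aᵀV, aᵀb/(2bᵀb) − (ν/2)(α + β − 2d), c + ν(α − d)(β − d)]] is positive semidefinite.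 -/
open Matrix

/-- The `(n+1) × (n+1)` certificate matrix
`[[VᵀAV, (1/(2bᵀb))VᵀAb, Vᵀa],
  [(1/(2bᵀb))bᵀAV, bᵀAb/(2bᵀb)² + ν, aᵀb/(2bᵀb) − (ν/2)(α+β−2d)],
  [aᵀV, aᵀb/(2bᵀb) − (ν/2)(α+β−2d), c + ν(α−d)(β−d)]]`,
indexed by `Fin (n-1) ⊕ (Fin 1 ⊕ Fin 1)`. -/
noncomputable def certMatrix {n : ℕ} (A : Matrix (Fin n) (Fin n) ℝ)
    (a b : Fin n → ℝ) (c d α β ν : ℝ) (V : Matrix (Fin n) (Fin (n - 1)) ℝ) :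
    Matrix (Fin (n - 1) ⊕ (Fin 1 ⊕ Fin 1)) (Fin (n - 1) ⊕ (Fin 1 ⊕ Fin 1)) ℝ :=
  Matrix.fromBlocks
    (Vᵀ * A * V)
    (Matrix.of fun i (j : Fin 1 ⊕ Fin 1) =>
      Sum.elim (fun _ => ((1 / (2 * (b ⬝ᵥ b))) • (Vᵀ *ᵥ (A *ᵥ b))) i)
        (fun _ => (Vᵀ *ᵥ a) i) j)
    (Matrix.of fun (i : Fin 1 ⊕ Fin 1) j =>
      Sum.elim (fun _ => ((1 / (2 * (b ⬝ᵥ b))) • (Vᵀ *ᵥ (A *ᵥ b))) j)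
        (fun _ => (Vᵀ *ᵥ a) j) i)
    (Matrix.fromBlocks
      (Matrix.of fun (_ _ : Fin 1) => b ⬝ᵥ (A *ᵥ b) / (2 * (b ⬝ᵥ b)) ^ 2 + ν)
      (Matrix.of fun (_ _ : Fin 1) => a ⬝ᵥ b / (2 * (b ⬝ᵥ b)) - ν / 2 * (α + β - 2 * d))
      (Matrix.of fun (_ _ : Fin 1) => a ⬝ᵥ b / (2 * (b ⬝ᵥ b)) - ν / 2 * (α + β - 2 * d))
      (Matrix.of fun (_ _ : Fin 1) => c + ν * (α - d) * (β - d)))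

/-!
Parametrize `ℝⁿ` by `x = V y + t b / (2 bᵀb)`, so that `h x = t + d`, and homogenize with a
variable `τ`. The quadratic form of the certificate matrix at `(y, t, τ)` is `F + ν G`, where `F` is
the homogenization of `f` and `G = (t - (α - d) τ) (t - (β - d) τ)` is that of the interval
constraint. Infeasibility means `F ≥ 0` on the cone `G ≤ 0` (on its part at infinity `τ = 0` by
letting the point run along a line inside the slab), and as `G` takes negative values the S-lemma
yields `ν ≥ 0` with `F + ν G ≥ 0`. The S-lemma is proved by taking for `ν` the infimum of
`M z / (-N z)` over `N z < 0`: for `N z₁ > 0 > N z₂` the line `z₂ + s z₁` meets the cone `N = 0`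
at some `s₁ < 0 < s₂`, and combining `M ≥ 0` at these two points separates the two ratios.
-/

theorem exists_roots_of_pos_of_neg {a p c : ℝ} (ha : 0 < a) (hc : c < 0) :
    ∃ s₁ s₂ : ℝ, s₁ < 0 ∧ 0 < s₂ ∧ a * s₁ ^ 2 + p * s₁ + c = 0 ∧
      a * s₂ ^ 2 + p * s₂ + c = 0 ∧ a * (s₁ * s₂) = c := by
  set r := √(p ^ 2 - 4 * a * c)
  have hr : r ^ 2 = p ^ 2 - 4 * a * c := Real.sq_sqrt (by nlinarith)
  have hpr : |p| < r := by
    rw [← Real.sqrt_sq_eq_abs]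
    exact Real.sqrt_lt_sqrt (sq_nonneg p) (by nlinarith)
  obtain ⟨hpr₁, hpr₂⟩ := abs_lt.1 hpr
  refine ⟨(-p - r) / (2 * a), (-p + r) / (2 * a), div_neg_of_neg_of_pos (by linarith) (by linarith),
    div_pos (by linarith) (by linarith), ?_, ?_, ?_⟩
  · field_simp
    linear_combination hr
  · field_simp
    linear_combination hr
  · field_simp
    linear_combination -hr

namespace QuadraticMap

variable {R M : Type*} [CommRing R] [AddCommGroup M] [Module R M]

theorem map_add_smul_s4 (Q : QuadraticForm R M) (x y : M) (a : R) :
    Q (x + a • y) = Q x + a * polar Q x y + a ^ 2 * Q y := by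
  rw [QuadraticMap.map_add (f := Q), Q.map_smul, polar_smul_right, smul_eq_mul, smul_eq_mul]
  ring

variable {E : Type*} [AddCommGroup E] [Module ℝ E]

theorem nonneg_of_forall_nonneg_add_smul (Q : QuadraticForm ℝ E) {u v : E}
    (h : ∀ s : ℝ, 0 ≤ Q (v + s • u)) : 0 ≤ Q u := by
  have hdisc := discrim_le_zero (a := Q u) (b := polar Q v u) (c := Q v) fun s => by
    linarith [map_add_smul_s4 Q v u s, h s]
  unfold discrim at hdisc
  by_contra! hneg
  nlinarith [h 1, h (-1), map_add_smul_s4 Q v u 1, map_add_smul_s4 Q v u (-1)]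

theorem apply_mul_apply_le_of_nonpos_imp_nonneg {M N : QuadraticForm ℝ E}
    (hMN : ∀ z, N z ≤ 0 → 0 ≤ M z) {z₁ z₂ : E} (h₁ : 0 < N z₁) (h₂ : N z₂ < 0) :
    M z₁ * N z₂ ≤ M z₂ * N z₁ := by
  obtain ⟨s₁, s₂, hs₁, hs₂, hroot₁, hroot₂, hprod⟩ :=
    exists_roots_of_pos_of_neg (p := polar N z₂ z₁) h₁ h₂
  have hM₁ : 0 ≤ M (z₂ + s₁ • z₁) := hMN _ (by rw [map_add_smul_s4]; linarith)
  have hM₂ : 0 ≤ M (z₂ + s₂ • z₁) := hMN _ (by rw [map_add_smul_s4]; linarith)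
  -- the combination with weights `s₂, -s₁` eliminates the cross term of `M`
  have hcomb : (s₂ - s₁) * (M z₂ - s₁ * s₂ * M z₁) =
      s₂ * M (z₂ + s₁ • z₁) + -s₁ * M (z₂ + s₂ • z₁) := by
    rw [map_add_smul_s4, map_add_smul_s4]
    ring
  have hkey : 0 ≤ M z₂ - s₁ * s₂ * M z₁ := by
    refine nonneg_of_mul_nonneg_right ?_ (sub_pos.2 (hs₁.trans hs₂))
    rw [hcomb]
    exact add_nonneg (mul_nonneg hs₂.le hM₁) (mul_nonneg (neg_nonneg.2 hs₁.le) hM₂)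
  rw [← hprod]
  linarith [mul_nonneg h₁.le hkey]

theorem s_lemma_s4 {M N : QuadraticForm ℝ E} {z₀ : E} (h₀ : N z₀ < 0) :
    (∀ z, N z ≤ 0 → 0 ≤ M z) ↔ ∃ ν : ℝ, 0 ≤ ν ∧ ∀ z, 0 ≤ M z + ν * N z := by
  refine ⟨fun hMN => ?_, fun ⟨ν, hν, h⟩ z hz => by nlinarith [h z]⟩
  set T : Set ℝ := (fun z => M z / -N z) '' {z | N z < 0}
  have hT : T.Nonempty := ⟨_, z₀, h₀, rfl⟩
  have hT₀ : ∀ r ∈ T, 0 ≤ r := by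
    rintro _ ⟨z, hz, rfl⟩
    exact div_nonneg (hMN z hz.le) (neg_nonneg.2 hz.le)
  refine ⟨sInf T, le_csInf hT hT₀, fun z => ?_⟩
  rcases lt_trichotomy (N z) 0 with hz | hz | hz
  · have := csInf_le ⟨0, hT₀⟩ ⟨z, hz, rfl⟩
    rw [le_div_iff₀ (neg_pos.2 hz)] at this
    linarith
  · simpa [hz] using hMN z hz.le
  · have : -(M z / N z) ≤ sInf T := le_csInf hT <| by
      rintro _ ⟨z', hz', rfl⟩
      rw [neg_div', div_le_div_iff₀ hz (neg_pos.2 hz')]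
      linarith [apply_mul_apply_le_of_nonpos_imp_nonneg hMN hz hz']
    rw [neg_le, le_div_iff₀ hz] at this
    linarith

end QuadraticMap

def blockVec {ι : Type*} (y : ι → ℝ) (t τ : ℝ) : ι ⊕ (Fin 1 ⊕ Fin 1) → ℝ :=
  Sum.elim y (Sum.elim (fun _ => t) (fun _ => τ))

def borderedMatrix {ι : Type*} (P : Matrix ι ι ℝ) (u w : ι → ℝ) (e₁ e₂ e₃ : ℝ) :
    Matrix (ι ⊕ (Fin 1 ⊕ Fin 1)) (ι ⊕ (Fin 1 ⊕ Fin 1)) ℝ :=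
  fromBlocks P (of fun i j => Sum.elim (fun _ => u i) (fun _ => w i) j)
    (of fun i j => Sum.elim (fun _ => u j) (fun _ => w j) i)
    (fromBlocks (of fun _ _ => e₁) (of fun _ _ => e₂) (of fun _ _ => e₂) (of fun _ _ => e₃))

theorem blockVec_dotProduct_borderedMatrix_mulVec {ι : Type*} [Fintype ι] (P : Matrix ι ι ℝ)
    (u w : ι → ℝ) (e₁ e₂ e₃ : ℝ) (y : ι → ℝ) (t τ : ℝ) :
    blockVec y t τ ⬝ᵥ borderedMatrix P u w e₁ e₂ e₃ *ᵥ blockVec y t τ =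
      y ⬝ᵥ P *ᵥ y + 2 * t * (y ⬝ᵥ u) + 2 * τ * (y ⬝ᵥ w) + e₁ * t ^ 2 + 2 * e₂ * t * τ +
        e₃ * τ ^ 2 := by
  have hB : (of fun i j => Sum.elim (fun _ : Fin 1 => u i) (fun _ : Fin 1 => w i) j) *ᵥ
      Sum.elim (fun _ => t) (fun _ => τ) = t • u + τ • w := by
    ext i
    simp [mulVec, dotProduct, mul_comm]
  have hC : (of fun i j => Sum.elim (fun _ : Fin 1 => u j) (fun _ : Fin 1 => w j) i) *ᵥ y =
      Sum.elim (fun _ => u ⬝ᵥ y) (fun _ => w ⬝ᵥ y) := by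
    ext (i | i) <;> rfl
  have hdot (p q : ℝ) : (fun _ : Fin 1 => p) ⬝ᵥ (fun _ => q) = p * q := by simp [dotProduct]
  have hscalar (e q : ℝ) : (of fun _ _ : Fin 1 => e) *ᵥ (fun _ => q) = fun _ => e * q := by
    ext; simp [mulVec, dotProduct]
  simp only [borderedMatrix, blockVec, fromBlocks_mulVec, sumElim_dotProduct_sumElim,
    Sum.elim_comp_inl, Sum.elim_comp_inr, hB, hC]
  simp only [hscalar, sumElim_dotProduct_sumElim, dotProduct_add, hdot, dotProduct_smul,
    smul_eq_mul, dotProduct_comm y u, dotProduct_comm y w]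
  ring

theorem certMatrix_eq_borderedMatrix {n : ℕ} (A : Matrix (Fin n) (Fin n) ℝ)
    (a b : Fin n → ℝ) (c d α β ν : ℝ) (V : Matrix (Fin n) (Fin (n - 1)) ℝ) :
    certMatrix A a b c d α β ν V = borderedMatrix (Vᵀ * A * V)
      ((1 / (2 * (b ⬝ᵥ b))) • (Vᵀ *ᵥ (A *ᵥ b))) (Vᵀ *ᵥ a)
      (b ⬝ᵥ (A *ᵥ b) / (2 * (b ⬝ᵥ b)) ^ 2 + ν) (a ⬝ᵥ b / (2 * (b ⬝ᵥ b)) - ν / 2 * (α + β - 2 * d))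
      (c + ν * (α - d) * (β - d)) := rfl

theorem exists_eq_blockVec {ι : Type*} (z : ι ⊕ (Fin 1 ⊕ Fin 1) → ℝ) :
    ∃ y t τ, z = blockVec y t τ :=
  ⟨z ∘ Sum.inl, z (Sum.inr (Sum.inl 0)), z (Sum.inr (Sum.inr 0)), by
    ext (i | i | i) <;> simp [blockVec, Fin.fin_one_eq_zero]⟩

@[simp]
theorem smul_blockVec {ι : Type*} (s : ℝ) (y : ι → ℝ) (t τ : ℝ) :
    s • blockVec y t τ = blockVec (s • y) (s * t) (s * τ) := by
  ext (i | i | i) <;> simp [blockVec]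

@[simp]
theorem blockVec_add_blockVec {ι : Type*} (y y' : ι → ℝ) (t t' τ τ' : ℝ) :
    blockVec y t τ + blockVec y' t' τ' = blockVec (y + y') (t + t') (τ + τ') := by
  ext (i | i | i) <;> simp [blockVec]

-- The homogenization of the constraint `p ≤ t ≤ q`, i.e. of `(t - p) (t - q) ≤ 0`.
def intervalForm (ι : Type*) (p q : ℝ) : QuadraticForm ℝ (ι ⊕ (Fin 1 ⊕ Fin 1) → ℝ) :=
  let ℓ (r : ℝ) : (ι ⊕ (Fin 1 ⊕ Fin 1) → ℝ) →ₗ[ℝ] ℝ :=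
    LinearMap.proj (Sum.inr (Sum.inl 0)) - r • LinearMap.proj (Sum.inr (Sum.inr 0))
  QuadraticMap.linMulLin (ℓ p) (ℓ q)

@[simp]
theorem intervalForm_blockVec {ι : Type*} (p q : ℝ) (y : ι → ℝ) (t τ : ℝ) :
    intervalForm ι p q (blockVec y t τ) = (t - p * τ) * (t - q * τ) := by
  simp [intervalForm, QuadraticMap.linMulLin_apply, blockVec]

theorem forall_nonneg_blockVec_one_iff {ι : Type*} (F : QuadraticForm ℝ (ι ⊕ (Fin 1 ⊕ Fin 1) → ℝ))
    {p q : ℝ} (hpq : p ≤ q) :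
    (∀ y t, p ≤ t → t ≤ q → 0 ≤ F (blockVec y t 1)) ↔
      ∀ z, intervalForm ι p q z ≤ 0 → 0 ≤ F z := by
  refine ⟨fun hF z hz => ?_, fun hF y t hpt htq => hF _ ?_⟩
  · obtain ⟨y, t, τ, rfl⟩ := exists_eq_blockVec z
    rw [intervalForm_blockVec] at hz
    by_cases hτ : τ = 0
    · -- then `t = 0`, and `F (y, 0, 0)` is the leading coefficient of `s ↦ F (s y, p, 1)`
      obtain rfl : t = 0 :=
        mul_self_eq_zero.1 (le_antisymm (by simpa [hτ] using hz) (mul_self_nonneg t))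
      subst hτ
      refine QuadraticMap.nonneg_of_forall_nonneg_add_smul F (v := blockVec 0 p 1) fun s => ?_
      simpa using hF (s • y) p le_rfl hpq
    · have hz' : (t / τ - p) * (t / τ - q) ≤ 0 := by
        have : (t / τ - p) * (t / τ - q) = (t - p * τ) * (t - q * τ) / τ ^ 2 := by
          field_simp
        rw [this]
        exact div_nonpos_of_nonpos_of_nonneg hz (sq_nonneg τ)
      have hscale : blockVec y t τ = τ • blockVec (τ⁻¹ • y) (t / τ) 1 := by
        simp [smul_smul, hτ, mul_div_cancel₀]
      rw [hscale, QuadraticMap.map_smul, smul_eq_mul]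
      refine mul_nonneg (mul_self_nonneg τ) (hF _ _ ?_ ?_) <;> nlinarith
  · rw [intervalForm_blockVec]
    nlinarith

@[simp]
theorem qfun_zero {n : ℕ} (b : Fin n → ℝ) (d : ℝ) (x : Fin n → ℝ) :
    qfun 0 b d x = 2 * (b ⬝ᵥ x) + d := by
  simp [qfun]

section DegenerateCase

variable {n : ℕ} (A : Matrix (Fin n) (Fin n) ℝ) (a b : Fin n → ℝ) (c d α β : ℝ)
  (V : Matrix (Fin n) (Fin (n - 1)) ℝ)

noncomputable def paramPoint (y : Fin (n - 1) → ℝ) (t : ℝ) : Fin n → ℝ :=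
  V *ᵥ y + (t / (2 * (b ⬝ᵥ b))) • b

theorem blockVec_dotProduct_certMatrix_mulVec (hA : A.IsSymm) (ν : ℝ) (y : Fin (n - 1) → ℝ)
    (t τ : ℝ) :
    blockVec y t τ ⬝ᵥ certMatrix A a b c d α β ν V *ᵥ blockVec y t τ =
      paramPoint b V y t ⬝ᵥ A *ᵥ paramPoint b V y t + 2 * τ * (a ⬝ᵥ paramPoint b V y t) +
        c * τ ^ 2 + ν * ((t - (α - d) * τ) * (t - (β - d) * τ)) := by
  have hVt (u : Fin n → ℝ) : y ⬝ᵥ Vᵀ *ᵥ u = V *ᵥ y ⬝ᵥ u := by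
    rw [dotProduct_mulVec, vecMul_transpose]
  have hAsymm (u : Fin n → ℝ) : b ⬝ᵥ A *ᵥ u = u ⬝ᵥ A *ᵥ b := by
    rw [dotProduct_mulVec, ← vecMul_transpose, hA.eq, dotProduct_comm]
  rw [certMatrix_eq_borderedMatrix, blockVec_dotProduct_borderedMatrix_mulVec, ← mulVec_mulVec,
    ← mulVec_mulVec]
  simp only [hVt, paramPoint, mulVec_add, mulVec_smul, dotProduct_add, add_dotProduct,
    dotProduct_smul, smul_dotProduct, smul_eq_mul, hAsymm, dotProduct_comm a]
  ring

theorem certMatrix_isHermitian (hA : A.IsSymm) (ν : ℝ) :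
    (certMatrix A a b c d α β ν V).IsHermitian := by
  rw [isHermitian_iff_isSymm, certMatrix_eq_borderedMatrix]
  refine IsSymm.fromBlocks ?_ rfl (IsSymm.fromBlocks rfl rfl rfl)
  simp [IsSymm, transpose_mul, hA.eq, Matrix.mul_assoc]

theorem dotProduct_certMatrix_mulVec (hA : A.IsSymm) (ν : ℝ)
    (z : Fin (n - 1) ⊕ (Fin 1 ⊕ Fin 1) → ℝ) :
    z ⬝ᵥ certMatrix A a b c d α β ν V *ᵥ z = (certMatrix A a b c d α β 0 V).toQuadraticForm' z +
      ν * intervalForm (Fin (n - 1)) (α - d) (β - d) z := by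
  obtain ⟨y, t, τ, rfl⟩ := exists_eq_blockVec z
  simp only [Matrix.toQuadraticForm', LinearMap.BilinMap.toQuadraticMap_apply,
    toLinearMap₂'_apply', blockVec_dotProduct_certMatrix_mulVec A a b c d α β V hA,
    intervalForm_blockVec]
  ring

theorem posSemidef_certMatrix_iff (hA : A.IsSymm) (ν : ℝ) :
    (certMatrix A a b c d α β ν V).PosSemidef ↔
      ∀ z, 0 ≤ (certMatrix A a b c d α β 0 V).toQuadraticForm' z +
        ν * intervalForm (Fin (n - 1)) (α - d) (β - d) z := by
  rw [posSemidef_iff_dotProduct_mulVec,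
    and_iff_right (certMatrix_isHermitian A a b c d α β V hA ν)]
  simp only [star_trivial, dotProduct_certMatrix_mulVec A a b c d α β V hA]

theorem qfun_paramPoint (hA : A.IsSymm) (y : Fin (n - 1) → ℝ) (t : ℝ) :
    qfun A a c (paramPoint b V y t) =
      (certMatrix A a b c d α β 0 V).toQuadraticForm' (blockVec y t 1) := by
  simp only [Matrix.toQuadraticForm', LinearMap.BilinMap.toQuadraticMap_apply,
    toLinearMap₂'_apply', blockVec_dotProduct_certMatrix_mulVec A a b c d α β V hA, qfun]
  ring

variable {b V}

theorem two_mul_dotProduct_paramPoint (hb : b ≠ 0) (hV : ∀ x, b ⬝ᵥ x = 0 ↔ ∃ y, V *ᵥ y = x)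
    (y : Fin (n - 1) → ℝ) (t : ℝ) : 2 * (b ⬝ᵥ paramPoint b V y t) = t := by
  have hbb : b ⬝ᵥ b ≠ 0 := fun h => hb (dotProduct_self_eq_zero.1 h)
  rw [paramPoint, dotProduct_add, (hV _).2 ⟨y, rfl⟩, dotProduct_smul, smul_eq_mul]
  field_simp
  ring

theorem exists_paramPoint_eq (hb : b ≠ 0) (hV : ∀ x, b ⬝ᵥ x = 0 ↔ ∃ y, V *ᵥ y = x)
    (x : Fin n → ℝ) : ∃ y, paramPoint b V y (2 * (b ⬝ᵥ x)) = x := by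
  have hbb : b ⬝ᵥ b ≠ 0 := fun h => hb (dotProduct_self_eq_zero.1 h)
  obtain ⟨y, hy⟩ := (hV (x - (b ⬝ᵥ x / b ⬝ᵥ b) • b)).1 <| by
    rw [dotProduct_sub, dotProduct_smul, smul_eq_mul, div_mul_cancel₀ _ hbb, sub_self]
  refine ⟨y, ?_⟩
  rw [paramPoint, hy, mul_div_mul_left _ _ two_ne_zero, sub_add_cancel]

theorem not_exists_slab_iff (hb : b ≠ 0) (hV : ∀ x, b ⬝ᵥ x = 0 ↔ ∃ y, V *ᵥ y = x) :
    (¬ ∃ x, qfun A a c x < 0 ∧ α ≤ 2 * (b ⬝ᵥ x) + d ∧ 2 * (b ⬝ᵥ x) + d ≤ β) ↔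
      ∀ y t, α - d ≤ t → t ≤ β - d → 0 ≤ qfun A a c (paramPoint b V y t) := by
  constructor
  · intro h y t hαt htβ
    have ht := two_mul_dotProduct_paramPoint hb hV y t
    exact not_lt.1 fun hneg => h ⟨_, hneg, by linarith, by linarith⟩
  · rintro h ⟨x, hx, hαx, hxβ⟩
    obtain ⟨y, hy⟩ := exists_paramPoint_eq hb hV x
    have := h y (2 * (b ⬝ᵥ x)) (by linarith) (by linarith)
    rw [hy] at this
    exact this.not_gt hx

end DegenerateCase

theorem s_lemma_interval_degenerate_case_general (n : ℕ)
    (A B : Matrix (Fin n) (Fin n) ℝ) (hA : A.IsSymm)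
    (a b : Fin n → ℝ) (c d : ℝ) (α β : ℝ) (hαβ : α < β)
    (hB0 : B = 0) (hb : b ≠ 0)
    (V : Matrix (Fin n) (Fin (n - 1)) ℝ)
    (hVspan : (Submodule.span ℝ (Set.range fun j : Fin (n - 1) => fun i : Fin n => V i j)
      : Set (Fin n → ℝ)) = {x : Fin n → ℝ | b ⬝ᵥ x = 0}) :
    (¬ ∃ x : Fin n → ℝ, qfun A a c x < 0 ∧ α ≤ qfun B b d x ∧ qfun B b d x ≤ β) ↔
      (∃ ν : ℝ, 0 ≤ ν ∧ (certMatrix A a b c d α β ν V).PosSemidef) := by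
  subst hB0
  have hV (x : Fin n → ℝ) : b ⬝ᵥ x = 0 ↔ ∃ y, V *ᵥ y = x := by
    have hx : x ∈ LinearMap.range V.mulVecLin ↔ b ⬝ᵥ x = 0 := by
      rw [range_mulVecLin]
      exact Set.ext_iff.1 hVspan x
    exact hx.symm.trans LinearMap.mem_range
  have hmid : intervalForm (Fin (n - 1)) (α - d) (β - d) (blockVec 0 ((α + β) / 2 - d) 1) < 0 := by
    rw [intervalForm_blockVec]
    nlinarith
  simp only [qfun_zero, not_exists_slab_iff A a c d α β hb hV,
    qfun_paramPoint A a b c d α β V hA,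
    forall_nonneg_blockVec_one_iff _ (sub_le_sub_right hαβ.le d), QuadraticMap.s_lemma_s4 hmid,
    posSemidef_certMatrix_iff A a b c d α β V hA]

/-- S-lemma with interval bounds in the degenerate case `B = 0`, `b ≠ 0`:
unsolvability is equivalent to positive semidefiniteness of a certificate matrix. -/
theorem s_lemma_interval_degenerate_case (n : ℕ) (hn : 0 < n)
    (A B : Matrix (Fin n) (Fin n) ℝ) (hA : A.IsSymm) (hB : B.IsSymm)
    (a b : Fin n → ℝ) (c d : ℝ) (α β : ℝ) (hαβ : α < β)
    (hB0 : B = 0) (hb : b ≠ 0)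
    (V : Matrix (Fin n) (Fin (n - 1)) ℝ)
    (hVindep : LinearIndependent ℝ (fun j : Fin (n - 1) => fun i : Fin n => V i j))
    (hVspan : (Submodule.span ℝ (Set.range fun j : Fin (n - 1) => fun i : Fin n => V i j)
      : Set (Fin n → ℝ)) = {x : Fin n → ℝ | b ⬝ᵥ x = 0}) :
    (¬ ∃ x : Fin n → ℝ, qfun A a c x < 0 ∧ α ≤ qfun B b d x ∧ qfun B b d x ≤ β) ↔
      (∃ ν : ℝ, 0 ≤ ν ∧ (certMatrix A a b c d α β ν V).PosSemidef) :=
  s_lemma_interval_degenerate_case_general n A B hA a b c d α β hαβ hB0 hb V hVspan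
end

section
/- Suppose α < β are real numbers, B = 0 and b ≠ 0. Then the system f(x) < 0, α ≤ h(x) ≤ β has no solution x ∈ ℝⁿ if and only if there exists a real number ν ≥ 0 such that f(x) + ν·(h(x) − α)·(h(x) − β) ≥ 0 for all x ∈ ℝⁿ. -/
/-!
Along the line through two points `x` and `y` with `h x ≠ h y`, parametrised by the value of `h`,
`f` becomes a quadratic polynomial in one variable that is nonnegative on `[α, β]`, and the
one-dimensional S-lemma yields a multiplier `ν` that works at both `x` and `y`. Writing
`g = (h - α)(h - β)`, this says `-f x / g x ≤ f y / (-g y)` whenever `g x > 0 > g y`; the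
supremum of the left-hand sides is then a multiplier that works everywhere.
-/

open Matrix

def IsQuadraticOnLines {V P : Type*} [AddCommGroup V] [Module ℝ V] [AddTorsor V P]
    (f : P → ℝ) : Prop :=
  ∀ x y : P, ∃ p q r : ℝ, ∀ t : ℝ, f (AffineMap.lineMap x y t) = p * t ^ 2 + q * t + r

theorem exists_quadratic_comp_affine (p q r k m : ℝ) :
    ∃ P Q R : ℝ, ∀ s : ℝ,
      p * (k * s + m) ^ 2 + q * (k * s + m) + r = P * s ^ 2 + Q * s + R :=
  ⟨p * k ^ 2, 2 * p * k * m + q * k, p * m ^ 2 + q * m + r, fun s => by ring⟩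

theorem exists_nonneg_forall_quadratic_add_mul_nonneg {p q r α β : ℝ} (hαβ : α < β)
    (hP : ∀ s, α ≤ s → s ≤ β → 0 ≤ p * s ^ 2 + q * s + r) :
    ∃ ν, 0 ≤ ν ∧ ∀ s, 0 ≤ p * s ^ 2 + q * s + r + ν * (s - α) * (s - β) := by
  set P : ℝ → ℝ := fun s => p * s ^ 2 + q * s + r with hPdef
  have hδ : 0 < (β - α) ^ 2 := by have := sub_pos.2 hαβ; positivity
  have hα : 0 ≤ P α := hP α le_rfl hαβ.le
  have hβ : 0 ≤ P β := hP β hαβ.le le_rfl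
  set κ := p * (β - α) ^ 2 - P α - P β
  -- interpolation of `P` from its values at `α`, `β` and its leading coefficient
  have key : ∀ s, P s * (β - α) ^ 2
      = P α * (β - s) ^ 2 + P β * (s - α) ^ 2 + κ * (s - α) * (s - β) := fun s => by
    simp only [κ, hPdef]; ring
  rcases le_or_gt κ 0 with hκ | hκ
  · refine ⟨-κ / (β - α) ^ 2, div_nonneg (neg_nonneg.2 hκ) hδ.le, fun s => ?_⟩
    have hcancel : -κ / (β - α) ^ 2 * (β - α) ^ 2 = -κ := div_mul_cancel₀ _ hδ.ne'
    have hsq : (P s + -κ / (β - α) ^ 2 * (s - α) * (s - β)) * (β - α) ^ 2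
        = P α * (β - s) ^ 2 + P β * (s - α) ^ 2 := by
      linear_combination key s + (s - α) * (s - β) * hcancel
    refine nonneg_of_mul_nonneg_left ?_ hδ
    rw [hsq]
    positivity
  · refine ⟨0, le_rfl, fun s => ?_⟩
    rw [zero_mul, zero_mul, add_zero]
    by_cases hs : α ≤ s ∧ s ≤ β
    · exact hP s hs.1 hs.2
    · have hout : 0 < (s - α) * (s - β) := by
        rcases not_and_or.1 hs with hs | hs
        · exact mul_pos_of_neg_of_neg (by linarith) (by linarith)
        · exact mul_pos (by linarith) (by linarith)
      refine nonneg_of_mul_nonneg_left ?_ hδ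
      rw [key s]
      have := mul_pos hκ hout
      nlinarith [mul_nonneg hα (sq_nonneg (β - s)), mul_nonneg hβ (sq_nonneg (s - α))]

theorem exists_nonneg_forall_add_mul_nonneg {X : Type*} {f g : X → ℝ}
    (hfeas : ∀ x, g x ≤ 0 → 0 ≤ f x) (hslater : ∃ y, g y < 0)
    (hpair : ∀ x y, 0 < g x → g y < 0 → ∃ ν, 0 ≤ f x + ν * g x ∧ 0 ≤ f y + ν * g y) :
    ∃ ν, 0 ≤ ν ∧ ∀ x, 0 ≤ f x + ν * g x := by
  set M : Set ℝ := insert 0 ((fun x => -f x / g x) '' {x | 0 < g x})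
  have hM : ∀ y, g y < 0 → ∀ m ∈ M, m ≤ f y / -g y := by
    intro y hy m hm
    rcases hm with rfl | ⟨x, hx, rfl⟩
    · exact div_nonneg (hfeas y hy.le) (neg_nonneg.2 hy.le)
    · obtain ⟨ν, hνx, hνy⟩ := hpair x y hx hy
      calc -f x / g x ≤ ν := by rw [div_le_iff₀ hx]; linarith
        _ ≤ f y / -g y := by rw [le_div_iff₀ (neg_pos.2 hy)]; linarith
  obtain ⟨y₀, hy₀⟩ := hslater
  have hbdd : BddAbove M := ⟨_, hM y₀ hy₀⟩
  refine ⟨sSup M, le_csSup hbdd (Set.mem_insert _ _), fun x => ?_⟩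
  rcases lt_trichotomy (g x) 0 with hx | hx | hx
  · have := csSup_le (Set.insert_nonempty _ _) (hM x hx)
    rw [le_div_iff₀ (neg_pos.2 hx)] at this
    linarith
  · simpa [hx] using hfeas x hx.le
  · have := le_csSup hbdd (Set.mem_insert_of_mem _ ⟨x, hx, rfl⟩)
    rw [div_le_iff₀ hx] at this
    linarith

section AffineSpace

variable {V P : Type*} [AddCommGroup V] [Module ℝ V] [AddTorsor V P]

theorem exists_add_mul_nonneg_pair {f : P → ℝ} (hf : IsQuadraticOnLines f) (h : P →ᵃ[ℝ] ℝ)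
    {α β : ℝ} (hαβ : α < β) (hfeas : ∀ x, α ≤ h x → h x ≤ β → 0 ≤ f x) {x y : P}
    (hxy : h x ≠ h y) :
    ∃ ν, 0 ≤ f x + ν * ((h x - α) * (h x - β)) ∧ 0 ≤ f y + ν * ((h y - α) * (h y - β)) := by
  obtain ⟨p, q, r, hline⟩ := hf x y
  set k := (h y - h x)⁻¹
  have hk : k * (h y - h x) = 1 := inv_mul_cancel₀ (sub_ne_zero.2 hxy.symm)
  set m := -(k * h x)
  have hh : ∀ s, h (AffineMap.lineMap x y (k * s + m)) = s := fun s => by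
    rw [AffineMap.apply_lineMap, AffineMap.lineMap_apply_ring']
    linear_combination (s - h x) * hk
  obtain ⟨p', q', r', hPQR⟩ := exists_quadratic_comp_affine p q r k m
  obtain ⟨ν, -, hν⟩ := exists_nonneg_forall_quadratic_add_mul_nonneg (p := p') (q := q') (r := r')
    hαβ fun s hαs hsβ => by
      rw [← hPQR, ← hline]
      exact hfeas _ (by rwa [hh]) (by rwa [hh])
  have hx : k * h x + m = 0 := by ring
  have hy : k * h y + m = 1 := by linear_combination hk
  refine ⟨ν, ?_, ?_⟩
  · have := hν (h x)
    rwa [← hPQR, ← hline, hx, AffineMap.lineMap_apply_zero, mul_assoc] at this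
  · have := hν (h y)
    rwa [← hPQR, ← hline, hy, AffineMap.lineMap_apply_one, mul_assoc] at this

theorem sLemma_affine_interval {f : P → ℝ} (hf : IsQuadraticOnLines f) (h : P →ᵃ[ℝ] ℝ)
    {α β : ℝ} (hslater : ∃ x, α < h x ∧ h x < β) :
    (¬ ∃ x, f x < 0 ∧ α ≤ h x ∧ h x ≤ β) ↔
      ∃ ν, 0 ≤ ν ∧ ∀ x, 0 ≤ f x + ν * (h x - α) * (h x - β) := by
  constructor
  · intro hne
    have hfeas : ∀ x, α ≤ h x → h x ≤ β → 0 ≤ f x := fun x hαx hxβ =>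
      not_lt.1 fun hfx => hne ⟨x, hfx, hαx, hxβ⟩
    obtain ⟨x₀, hαx₀, hx₀β⟩ := hslater
    have hαβ := hαx₀.trans hx₀β
    obtain ⟨ν, hν, hall⟩ := exists_nonneg_forall_add_mul_nonneg
      (g := fun x => (h x - α) * (h x - β))
      (fun x hx => by
        rcases mul_nonpos_iff.1 hx with ⟨hαx, hxβ⟩ | ⟨hxα, hβx⟩
        · exact hfeas x (sub_nonneg.1 hαx) (sub_nonpos.1 hxβ)
        · linarith)
      ⟨x₀, mul_neg_of_pos_of_neg (by linarith) (by linarith)⟩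
      (fun x y hx hy => exists_add_mul_nonneg_pair hf h hαβ hfeas fun hxy => by
        simp only [hxy] at hx; linarith)
    exact ⟨ν, hν, fun x => by simpa only [mul_assoc] using hall x⟩
  · rintro ⟨ν, hν, hall⟩ ⟨x, hfx, hαx, hxβ⟩
    nlinarith [hall x, mul_nonneg hν (mul_nonneg (sub_nonneg.2 hαx) (sub_nonneg.2 hxβ))]

end AffineSpace

theorem isQuadraticOnLines_qfun {n : ℕ} (A : Matrix (Fin n) (Fin n) ℝ) (a : Fin n → ℝ) (c : ℝ) :
    IsQuadraticOnLines (qfun A a c) := fun x y =>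
  ⟨(y - x) ⬝ᵥ A *ᵥ (y - x), (y - x) ⬝ᵥ A *ᵥ x + x ⬝ᵥ A *ᵥ (y - x) + 2 * (a ⬝ᵥ (y - x)),
    qfun A a c x, fun t => by
      simp only [qfun, AffineMap.lineMap_apply_module', mulVec_add, mulVec_smul, dotProduct_add,
        add_dotProduct, dotProduct_smul, smul_dotProduct, smul_eq_mul]
      ring⟩

noncomputable def qfunZeroAffineMap {n : ℕ} (b : Fin n → ℝ) (d : ℝ) : (Fin n → ℝ) →ᵃ[ℝ] ℝ where
  toFun := qfun 0 b d
  linear := 2 • dotProductEquiv ℝ (Fin n) b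
  map_vadd' x v := by
    simp only [qfun, zero_mulVec, dotProduct_zero, zero_add, vadd_eq_add, dotProduct_add,
      LinearMap.smul_apply, dotProductEquiv_apply_apply, nsmul_eq_mul]
    push_cast
    ring

@[simp]
theorem coe_qfunZeroAffineMap {n : ℕ} (b : Fin n → ℝ) (d : ℝ) :
    ⇑(qfunZeroAffineMap b d) = qfun 0 b d :=
  rfl

theorem exists_qfun_zero_eq {n : ℕ} {b : Fin n → ℝ} (hb : b ≠ 0) (d s : ℝ) :
    ∃ x, qfun 0 b d x = s := by
  have hbb : b ⬝ᵥ b ≠ 0 := fun h => hb (dotProduct_self_eq_zero.1 h)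
  refine ⟨((s - d) / (2 * (b ⬝ᵥ b))) • b, ?_⟩
  simp only [qfun, zero_mulVec, dotProduct_zero, dotProduct_smul, smul_eq_mul]
  field_simp
  ring

theorem s_lemma_interval_linear_constraint_general (n : ℕ)
    (A B : Matrix (Fin n) (Fin n) ℝ)
    (a b : Fin n → ℝ) (c d : ℝ) (α β : ℝ) (hαβ : α < β)
    (hB0 : B = 0) (hb : b ≠ 0) :
    (¬ ∃ x : Fin n → ℝ, qfun A a c x < 0 ∧ α ≤ qfun B b d x ∧ qfun B b d x ≤ β) ↔
      (∃ ν : ℝ, 0 ≤ ν ∧ ∀ x : Fin n → ℝ,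
        qfun A a c x + ν * (qfun B b d x - α) * (qfun B b d x - β) ≥ 0) := by
  subst hB0
  obtain ⟨x₀, hx₀⟩ := exists_qfun_zero_eq hb d ((α + β) / 2)
  have hslater : ∃ x, α < qfunZeroAffineMap b d x ∧ qfunZeroAffineMap b d x < β :=
    ⟨x₀, by simp only [coe_qfunZeroAffineMap, hx₀]; constructor <;> linarith⟩
  simpa only [ge_iff_le, coe_qfunZeroAffineMap] using
    sLemma_affine_interval (isQuadraticOnLines_qfun A a c) (qfunZeroAffineMap b d) hslater

/-- S-lemma with interval bounds in the case `B = 0`, `b ≠ 0`, reformulated with the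
single quadratic constraint `(h(x) - α)(h(x) - β) ≤ 0`. -/
theorem s_lemma_interval_linear_constraint (n : ℕ) (hn : 0 < n)
    (A B : Matrix (Fin n) (Fin n) ℝ) (hA : A.IsSymm) (hB : B.IsSymm)
    (a b : Fin n → ℝ) (c d : ℝ) (α β : ℝ) (hαβ : α < β)
    (hB0 : B = 0) (hb : b ≠ 0) :
    (¬ ∃ x : Fin n → ℝ, qfun A a c x < 0 ∧ α ≤ qfun B b d x ∧ qfun B b d x ≤ β) ↔
      (∃ ν : ℝ, 0 ≤ ν ∧ ∀ x : Fin n → ℝ,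
        qfun A a c x + ν * (qfun B b d x - α) * (qfun B b d x - β) ≥ 0) :=
  s_lemma_interval_linear_constraint_general n A B a b c d α β hαβ hB0 hb
end

section
/- Let α ≤ β be real numbers. There exists x̄ ∈ ℝⁿ with α < h(x̄) < β if and only if there exist x̂ ∈ ℝⁿ and a real symmetric n×n matrix X̂ with X̂ − x̂x̂ᵀ positive definite such that α < B•X̂ + 2bᵀx̂ + d < β, where B•X̂ denotes the trace inner product Σ_{i,j} B_{ij} X̂_{ij}. -/
/-!
Going from `x̄` to `(x̂, X̂) = (x̄, x̄x̄ᵀ + εI)` moves the lifted value `B•X̂ + 2bᵀx̂ + d` away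
from `h(x̄)` by `ε · tr B`, which stays inside `(α, β)` for small `ε > 0`. Conversely, write
`X̂ - x̂x̂ᵀ = ∑ₖ vₖvₖᵀ`; then the lifted value is `h(x̂) + ∑ₖ vₖᵀBvₖ`. Since
`h(x + p) + h(x - p) = 2 (h(x) + pᵀBp)`, adding one `vₖᵀBvₖ` to a value of `h` gives the midpoint
of two values of `h`, which is again a value of `h` because the range of the continuous function
`h` on `ℝⁿ` is an interval.
-/

open Matrix Set Filter Topology

section Pairing

variable {m n R : Type*} [Fintype m] [Fintype n] [CommSemiring R]

theorem sum_mul_vecMulVec (B : Matrix m n R) (x : m → R) (y : n → R) :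
    ∑ i, ∑ j, B i j * vecMulVec x y i j = x ⬝ᵥ B *ᵥ y := by
  simp only [vecMulVec_apply, dotProduct, mulVec, Finset.mul_sum]
  exact Finset.sum_congr rfl fun i _ => Finset.sum_congr rfl fun j _ => by ring

theorem sum_mul_add_apply (B X Y : Matrix m n R) :
    ∑ i, ∑ j, B i j * (X + Y) i j = ∑ i, ∑ j, B i j * X i j + ∑ i, ∑ j, B i j * Y i j := by
  simp only [Matrix.add_apply, mul_add, Finset.sum_add_distrib]

theorem sum_mul_sum_apply {κ : Type*} (B : Matrix m n R) (s : Finset κ)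
    (X : κ → Matrix m n R) :
    ∑ i, ∑ j, B i j * (∑ k ∈ s, X k) i j = ∑ k ∈ s, ∑ i, ∑ j, B i j * X k i j := by
  simp only [Matrix.sum_apply, Finset.mul_sum]
  exact (Finset.sum_congr rfl fun i _ => Finset.sum_comm).trans Finset.sum_comm

theorem sum_mul_smul_one_apply [DecidableEq n] (B : Matrix n n R) (c : R) :
    ∑ i, ∑ j, B i j * (c • 1 : Matrix n n R) i j = c * trace B := by
  simp [one_apply, trace, Finset.mul_sum, mul_comm]

end Pairing

section Quadratic

variable {ι : Type*} [Fintype ι] (B : Matrix ι ι ℝ) (b : ι → ℝ) (d : ℝ)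

def quadraticFun (x : ι → ℝ) : ℝ := x ⬝ᵥ B *ᵥ x + 2 * (b ⬝ᵥ x) + d

theorem quadraticFun_add_add_quadraticFun_sub (x p : ι → ℝ) :
    quadraticFun B b d (x + p) + quadraticFun B b d (x - p) =
      2 * (quadraticFun B b d x + p ⬝ᵥ B *ᵥ p) := by
  simp only [quadraticFun, mulVec_add, mulVec_sub, dotProduct_add, add_dotProduct,
    dotProduct_sub, sub_dotProduct]
  ring

theorem continuous_quadraticFun : Continuous (quadraticFun B b d) := by
  unfold quadraticFun dotProduct mulVec
  fun_prop

theorem quadraticFun_add_mem_range (x p : ι → ℝ) :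
    quadraticFun B b d x + p ⬝ᵥ B *ᵥ p ∈ range (quadraticFun B b d) := by
  have hconv : Convex ℝ (range (quadraticFun B b d)) :=
    Real.convex_iff_isPreconnected.mpr (isPreconnected_range (continuous_quadraticFun B b d))
  convert hconv.midpoint_mem (mem_range_self (x + p)) (mem_range_self (x - p)) using 1
  rw [midpoint_eq_smul_add, quadraticFun_add_add_quadraticFun_sub]
  simp

theorem quadraticFun_add_sum_mem_range {κ : Type*} (x : ι → ℝ) (s : Finset κ)
    (p : κ → ι → ℝ) :
    quadraticFun B b d x + ∑ k ∈ s, p k ⬝ᵥ B *ᵥ p k ∈ range (quadraticFun B b d) := by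
  classical
  induction s using Finset.induction_on with
  | empty => simp
  | insert a s ha ih =>
    obtain ⟨y, hy⟩ := ih
    rw [Finset.sum_insert ha, add_left_comm, ← hy, add_comm]
    exact quadraticFun_add_mem_range B b d y (p a)

theorem lifted_mem_range_quadraticFun {x : ι → ℝ} {X : Matrix ι ι ℝ}
    (hX : (X - vecMulVec x x).PosSemidef) :
    ∑ i, ∑ j, B i j * X i j + 2 * (b ⬝ᵥ x) + d ∈ range (quadraticFun B b d) := by
  obtain ⟨m, v, hv⟩ := posSemidef_iff_eq_sum_vecMulVec.mp hX
  simp only [star_trivial] at hv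
  rw [sub_eq_iff_eq_add'.mp hv, sum_mul_add_apply, sum_mul_sum_apply]
  simp_rw [sum_mul_vecMulVec]
  convert quadraticFun_add_sum_mem_range B b d x Finset.univ v using 1
  unfold quadraticFun
  ring

end Quadratic

theorem exists_pos_add_mul_mem_Ioo {v t α β : ℝ} (hv : v ∈ Ioo α β) :
    ∃ ε > 0, v + ε * t ∈ Ioo α β := by
  have hcont : Tendsto (fun ε : ℝ => v + ε * t) (𝓝[>] 0) (𝓝 v) := by
    have hc : Continuous fun ε : ℝ => v + ε * t := by fun_prop
    simpa using (hc.tendsto 0).mono_left nhdsWithin_le_nhds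
  exact ((hcont.eventually (Ioo_mem_nhds hv.1 hv.2)).and self_mem_nhdsWithin).exists.imp
    fun ε h => ⟨h.2, h.1⟩

theorem slater_iff_ricq_general (n : ℕ)
    (B : Matrix (Fin n) (Fin n) ℝ) (b : Fin n → ℝ) (d : ℝ)
    (α β : ℝ) :
    (∃ xbar : Fin n → ℝ, α < xbar ⬝ᵥ B *ᵥ xbar + 2 * (b ⬝ᵥ xbar) + d ∧
        xbar ⬝ᵥ B *ᵥ xbar + 2 * (b ⬝ᵥ xbar) + d < β) ↔
      (∃ (xhat : Fin n → ℝ) (Xhat : Matrix (Fin n) (Fin n) ℝ), Xhat.IsSymm ∧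
        (Xhat - Matrix.vecMulVec xhat xhat).PosDef ∧
        α < (∑ i : Fin n, ∑ j : Fin n, B i j * Xhat i j) + 2 * (b ⬝ᵥ xhat) + d ∧
        (∑ i : Fin n, ∑ j : Fin n, B i j * Xhat i j) + 2 * (b ⬝ᵥ xhat) + d < β) := by
  constructor
  · rintro ⟨x, hx⟩
    obtain ⟨ε, hε, hεx⟩ := exists_pos_add_mul_mem_Ioo (t := trace B) hx
    have hval : ∑ i, ∑ j, B i j * (vecMulVec x x + ε • 1) i j + 2 * (b ⬝ᵥ x) + d =
        quadraticFun B b d x + ε * trace B := by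
      rw [sum_mul_add_apply, sum_mul_vecMulVec, sum_mul_smul_one_apply, quadraticFun]
      ring
    have hsymm : (vecMulVec x x).IsSymm := transpose_vecMulVec x x
    refine ⟨x, vecMulVec x x + ε • 1, hsymm.add (isSymm_one.smul ε), ?_, hval ▸ hεx⟩
    rw [add_sub_cancel_left]
    exact PosDef.one.smul hε
  · rintro ⟨x, X, -, hX, hXα, hXβ⟩
    obtain ⟨y, hy⟩ := lifted_mem_range_quadraticFun B b d hX.posSemidef
    exact ⟨y, show quadraticFun B b d y ∈ Ioo α β from hy ▸ ⟨hXα, hXβ⟩⟩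

/-- The Slater condition `α < h(x̄) < β` is equivalent to the relative interior
constraint qualification `α < B•X̂ + 2bᵀx̂ + d < β` for some `X̂ ≻ x̂x̂ᵀ`. -/
theorem slater_iff_ricq (n : ℕ) (hn : 0 < n)
    (B : Matrix (Fin n) (Fin n) ℝ) (hB : B.IsSymm) (b : Fin n → ℝ) (d : ℝ)
    (α β : ℝ) (hαβ : α ≤ β) :
    (∃ xbar : Fin n → ℝ, α < xbar ⬝ᵥ B *ᵥ xbar + 2 * (b ⬝ᵥ xbar) + d ∧
        xbar ⬝ᵥ B *ᵥ xbar + 2 * (b ⬝ᵥ xbar) + d < β) ↔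
      (∃ (xhat : Fin n → ℝ) (Xhat : Matrix (Fin n) (Fin n) ℝ), Xhat.IsSymm ∧
        (Xhat - Matrix.vecMulVec xhat xhat).PosDef ∧
        α < (∑ i : Fin n, ∑ j : Fin n, B i j * Xhat i j) + 2 * (b ⬝ᵥ xhat) + d ∧
        (∑ i : Fin n, ∑ j : Fin n, B i j * Xhat i j) + 2 * (b ⬝ᵥ xhat) + d < β) :=
  slater_iff_ricq_general n B b d α β
end
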